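/- arXiv:1206.0233 — 10 statements merged into one kernel-verified Lean document; each statement's English description precedes it below -/
import Mathlib

section
/- If T is a spanning tree of a graph G such that every maximal clique of G induces a subtree of T, then for every edge uv of G, every vertex w on the tree path between u and v in T is adjacent in G to both u and v. -/
/-!
Extend the clique `{u, v}` to a maximal clique `S`. Since `S` induces a connected subgraph of
the tree `T`, some path from `u` to `v` runs inside `S`, and by uniqueness of tree paths it is the
tree path. Hence every internal vertex `w` lies in the clique `S`, so it is adjacent to `u` and `v`.
-/

open SimpleGraph

namespace SimpleGraph

variable {V : Type*}

lemma exists_maximal_isClique_mem_of_adj [Finite V] {G : SimpleGraph V} {u v : V}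
    (huv : G.Adj u v) : ∃ s : Set V, Maximal G.IsClique s ∧ u ∈ s ∧ v ∈ s := by
  obtain ⟨s, hle, hmax⟩ := Finite.exists_le_maximal (isClique_pair.mpr fun _ => huv)
  exact ⟨s, hmax, hle (by simp), hle (by simp)⟩

lemma IsAcyclic.mem_of_mem_support_of_connected_induce {T : SimpleGraph V} (hT : T.IsAcyclic)
    {s : Set V} (hs : (T.induce s).Connected) {u v : V} (hu : u ∈ s) (hv : v ∈ s)
    (p : T.Path u v) {w : V} (hw : w ∈ p.1.support) : w ∈ s := by
  classical
  obtain ⟨q⟩ := hs ⟨u, hu⟩ ⟨v, hv⟩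
  have hp : p = (q.map (Embedding.induce s).toHom).toPath := (hT.subsingleton_path u v).elim _ _
  have hwq : w ∈ (q.map (Embedding.induce s).toHom).support :=
    Walk.support_toPath_subset_support _ (hp ▸ hw)
  rw [Walk.support_map] at hwq
  obtain ⟨x, -, rfl⟩ := List.mem_map.mp hwq
  exact x.2

end SimpleGraph

theorem stmt_0_general {V : Type*} [Fintype V] (G T : SimpleGraph V)
    (htree : T.IsTree)
    (hclique : ∀ s : Set V, Maximal G.IsClique s → (T.induce s).Connected) :
    ∀ u v : V, G.Adj u v → ∀ p : T.Path u v, ∀ w ∈ p.1.support,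
      w ≠ u → w ≠ v → G.Adj u w ∧ G.Adj v w := by
  intro u v huv p w hw hwu hwv
  obtain ⟨s, hmax, hu, hv⟩ := exists_maximal_isClique_mem_of_adj huv
  have hws : w ∈ s :=
    htree.isAcyclic.mem_of_mem_support_of_connected_induce (hclique s hmax) hu hv p hw
  exact ⟨hmax.1 hu hws hwu.symm, hmax.1 hv hws hwv.symm⟩

theorem stmt_0 {V : Type*} [Fintype V] (G T : SimpleGraph V)
    (hGconn : G.Connected) (hsub : T ≤ G) (htree : T.IsTree)
    (hclique : ∀ s : Set V, Maximal G.IsClique s → (T.induce s).Connected) :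
    ∀ u v : V, G.Adj u v → ∀ p : T.Path u v, ∀ w ∈ p.1.support,
      w ≠ u → w ≠ v → G.Adj u w ∧ G.Adj v w :=
  stmt_0_general G T htree hclique
end

section
/- If T is a spanning tree of a graph G such that for every edge uv of G every internal vertex of the tree path from u to v is adjacent to both u and v, then every maximal clique of G induces a subtree of T. -/
open SimpleGraph

theorem stmt_1 {V : Type*} [Fintype V] (G T : SimpleGraph V)
    (hGconn : G.Connected) (hsub : T ≤ G) (htree : T.IsTree)
    (hpath : ∀ u v : V, G.Adj u v → ∀ p : T.Path u v, ∀ w ∈ p.1.support,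
      w ≠ u → w ≠ v → G.Adj u w ∧ G.Adj v w) :
    ∀ s : Set V, Maximal G.IsClique s → (T.induce s).Connected := by
  classical
  have huniq := (isTree_iff_existsUnique_path.mp htree).2
  intro s hmax
  -- s is nonempty
  have hne : ∃ v, v ∈ s := by
    obtain ⟨v⟩ := hGconn.nonempty
    by_contra h
    push_neg at h
    have hs : s = ∅ := Set.eq_empty_iff_forall_notMem.mpr h
    have hsub1 : ({v} : Set V) ⊆ s :=
      hmax.2 (G.isClique_singleton v) (by simp [hs])
    exact h v (hsub1 rfl)
  -- key: every vertex on a T-path between clique members is in s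
  have key : ∀ u v, u ∈ s → v ∈ s → ∀ p : T.Walk u v, p.IsPath →
      ∀ w ∈ p.support, w ∈ s := by
    intro u v hu hv p hp w hw
    by_cases hwu : w = u
    · subst hwu; exact hu
    by_cases hwv : w = v
    · subst hwv; exact hv
    have huv : u ≠ v := by
      rintro rfl
      rw [Walk.isPath_iff_eq_nil] at hp
      subst hp
      simp at hw
      exact hwu hw
    have hAdjuv : G.Adj u v := hmax.1 hu hv huv
    have hcl : G.IsClique (insert w s) := by
      rw [isClique_insert]
      refine ⟨hmax.1, ?_⟩
      intro x hx hwx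
      by_cases hxu : x = u
      · rw [hxu]
        exact ((hpath u v hAdjuv ⟨p, hp⟩ w hw hwu hwv).1).symm
      by_cases hxv : x = v
      · rw [hxv]
        exact ((hpath u v hAdjuv ⟨p, hp⟩ w hw hwu hwv).2).symm
      -- x ≠ u, x ≠ v
      obtain ⟨q, hq, -⟩ := huniq x u
      obtain ⟨r, hr, -⟩ := huniq x v
      have hW : w ∈ (q.reverse.append r).support := by
        have hbp : (q.reverse.append r).bypass = p := by
          obtain ⟨p', -, hup'⟩ := huniq u v
          rw [hup' _ ((q.reverse.append r).bypass_isPath), hup' _ hp]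
        have : w ∈ (q.reverse.append r).bypass.support := by rw [hbp]; exact hw
        exact Walk.support_bypass_subset _ this
      rw [Walk.mem_support_append_iff, Walk.support_reverse, List.mem_reverse] at hW
      rcases hW with hW | hW
      · exact ((hpath x u (hmax.1 hx hu hxu) ⟨q, hq⟩ w hW hwx hwu).1).symm
      · exact ((hpath x v (hmax.1 hx hv hxv) ⟨r, hr⟩ w hW hwx hwv).1).symm
    have : insert w s ⊆ s := hmax.2 hcl (Set.subset_insert w s)
    exact this (Set.mem_insert w s)
  -- lift walks with support in s to the induced graph
  have lift : ∀ (u v : V) (p : T.Walk u v), (∀ w ∈ p.support, w ∈ s) →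
      ∀ (hu : u ∈ s) (hv : v ∈ s),
      (T.induce s).Reachable ⟨u, hu⟩ ⟨v, hv⟩ := by
    intro u v p
    induction p with
    | nil => intro _ hu hv; rfl
    | @cons a b c h q ih =>
      intro hsup hu hv
      have hb : b ∈ s := hsup b (by simp)
      exact (SimpleGraph.Adj.reachable
        (show (T.induce s).Adj ⟨a, hu⟩ ⟨b, hb⟩ from h)).trans
        (ih (fun w hw => hsup w (by simp [hw])) hb hv)
  rw [connected_iff]
  refine ⟨?_, by obtain ⟨v, hv⟩ := hne; exact ⟨⟨v, hv⟩⟩⟩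
  rintro ⟨u, hu⟩ ⟨v, hv⟩
  obtain ⟨p, hp, -⟩ := huniq u v
  exact lift u v p (key u v hu hv p hp) hu hv
end

section
/- Let G be a graph and T a spanning tree of G such that for every edge uv of G every internal vertex of the tree path from u to v in T is adjacent to both u and v. Then for every edge uv of G, the set P_T[u,v] consisting of u, v, and all internal vertices of the tree path from u to v in T is a clique of G. -/
open SimpleGraph

theorem stmt_2 {V : Type*} [Fintype V] (G T : SimpleGraph V)
    (hGconn : G.Connected) (hsub : T ≤ G) (htree : T.IsTree)
    (hpath : ∀ u v : V, G.Adj u v → ∀ p : T.Path u v, ∀ w ∈ p.1.support,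
      w ≠ u → w ≠ v → G.Adj u w ∧ G.Adj v w) :
    ∀ u v : V, G.Adj u v → ∀ p : T.Path u v,
      G.IsClique {w : V | w ∈ p.1.support} := by
  intro u v huv p
  intro w1 hw1 w2 hw2 hne
  simp only [Set.mem_setOf_eq] at hw1 hw2
  classical
  by_cases h1u : w1 = u
  · rw [h1u]
    by_cases h2v : w2 = v
    · rw [h2v]; exact huv
    · exact (hpath u v huv p w2 hw2 (h1u ▸ Ne.symm hne) h2v).1
  by_cases h1v : w1 = v
  · rw [h1v]
    by_cases h2u : w2 = u
    · rw [h2u]; exact huv.symm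
    · exact (hpath u v huv p w2 hw2 h2u (h1v ▸ Ne.symm hne)).2
  by_cases h2u : w2 = u
  · rw [h2u]; exact ((hpath u v huv p w1 hw1 h1u h1v).1).symm
  by_cases h2v : w2 = v
  · rw [h2v]; exact ((hpath u v huv p w1 hw1 h1u h1v).2).symm
  have hadj2 : G.Adj u w2 ∧ G.Adj v w2 := hpath u v huv p w2 hw2 h2u h2v
  have hsplit : w1 ∈ (p.1.takeUntil w2 hw2).support ∨
      w1 ∈ (p.1.dropUntil w2 hw2).support := by
    have hspec := p.1.take_spec hw2
    have hmem : w1 ∈ ((p.1.takeUntil w2 hw2).append (p.1.dropUntil w2 hw2)).support := by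
      rw [hspec]; exact hw1
    rwa [SimpleGraph.Walk.mem_support_append_iff] at hmem
  cases hsplit with
  | inl h =>
    have hq : (p.1.takeUntil w2 hw2).IsPath := p.2.takeUntil hw2
    exact ((hpath u w2 hadj2.1 ⟨_, hq⟩ w1 h h1u hne).2).symm
  | inr h =>
    have hq : (p.1.dropUntil w2 hw2).IsPath := p.2.dropUntil hw2
    exact ((hpath w2 v hadj2.2.symm ⟨_, hq⟩ w1 h hne h1v).1).symm
end

section
/- Let G be a K4-free graph with a spanning tree T such that for every edge uv of G every internal vertex of the tree path from u to v is adjacent to both u and v. Then for every edge uv of G, the tree path from u to v in T has at most 3 vertices; in particular, if uv is an edge of G but not an edge of T, then there is a unique vertex w with both uw and wv edges of T. -/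
open SimpleGraph

theorem stmt_3 {V : Type*} [Fintype V] (G T : SimpleGraph V)
    (hGconn : G.Connected) (hK4 : G.CliqueFree 4) (hsub : T ≤ G) (htree : T.IsTree)
    (hpath : ∀ u v : V, G.Adj u v → ∀ p : T.Path u v, ∀ w ∈ p.1.support,
      w ≠ u → w ≠ v → G.Adj u w ∧ G.Adj v w) :
    (∀ u v : V, G.Adj u v → ∀ p : T.Path u v, p.1.support.length ≤ 3) ∧
    (∀ u v : V, G.Adj u v → ¬ T.Adj u v → ∃! w : V, T.Adj u w ∧ T.Adj w v) := by
  have part1 : ∀ u v : V, G.Adj u v → ∀ p : T.Path u v, p.1.support.length ≤ 3 := by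
    intro u v huv p
    classical
    by_contra hlen
    push_neg at hlen
    obtain ⟨q, hq⟩ := p
    match q with
    | SimpleGraph.Walk.nil => simp [SimpleGraph.Walk.support] at hlen
    | SimpleGraph.Walk.cons h SimpleGraph.Walk.nil => simp at hlen
    | SimpleGraph.Walk.cons (v := w1) h1 (SimpleGraph.Walk.cons (v := w2) h2 r) =>
      simp only [SimpleGraph.Walk.support_cons, List.length_cons] at hlen
      have hrlen : 1 ≤ r.length := by
        have := SimpleGraph.Walk.length_support r
        omega
      have hnodup := hq.support_nodup
      simp only [SimpleGraph.Walk.support_cons, List.nodup_cons] at hnodup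
      obtain ⟨hu_not, hw1_not, hnodup2⟩ := hnodup
      have hvr : v ∈ r.support := SimpleGraph.Walk.end_mem_support r
      have hw1u : w1 ≠ u := fun e => h1.ne e.symm
      have hw2u : w2 ≠ u := by
        intro e; subst e; exact hu_not (List.mem_cons_of_mem _ (SimpleGraph.Walk.start_mem_support r))
      have hw1w2 : w1 ≠ w2 := fun e => h2.ne e
      have hw1v : w1 ≠ v := by
        intro e; exact hw1_not (by simpa [e] using hvr)
      have hw2v : w2 ≠ v := by
        intro e
        subst e
        have : r.length = 0 := by
          by_contra hne
          have := hnodup2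
          cases r with
          | nil => exact hne rfl
          | cons h3 r' =>
            simp only [SimpleGraph.Walk.support_cons, List.nodup_cons] at this
            exact this.1 (SimpleGraph.Walk.end_mem_support r')
        omega
      have huv' : u ≠ v := huv.ne
      have hmem1 : w1 ∈ (SimpleGraph.Walk.cons h1 (SimpleGraph.Walk.cons h2 r)).support := by simp
      have hmem2 : w2 ∈ (SimpleGraph.Walk.cons h1 (SimpleGraph.Walk.cons h2 r)).support := by simp
      have h1' := hpath u v huv ⟨_, hq⟩ w1 hmem1 hw1u hw1v
      have h2' := hpath u v huv ⟨_, hq⟩ w2 hmem2 hw2u hw2v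
      refine hK4 {u, v, w1, w2} ⟨?_, ?_⟩
      · intro a ha b hb hab
        simp only [Finset.coe_insert, Set.mem_insert_iff, Finset.coe_singleton,
          Set.mem_singleton_iff] at ha hb
        have hadj12 : G.Adj w1 w2 := hsub h2
        rcases ha with rfl | rfl | rfl | rfl <;> rcases hb with rfl | rfl | rfl | rfl <;>
          first
          | exact absurd rfl hab
          | exact huv
          | exact huv.symm
          | exact h1'.1
          | exact h1'.1.symm
          | exact h1'.2
          | exact h1'.2.symm
          | exact h2'.1
          | exact h2'.1.symm
          | exact h2'.2
          | exact h2'.2.symm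
          | exact hadj12
          | exact hadj12.symm
      · rw [Finset.card_insert_of_notMem (by simp [huv', hw1u.symm, hw2u.symm]),
          Finset.card_insert_of_notMem (by simp [hw1v.symm, hw2v.symm]),
          Finset.card_insert_of_notMem (by simp [hw1w2]), Finset.card_singleton]
  refine ⟨part1, ?_⟩
  intro u v huv hTuv
  obtain ⟨p, hp, hunique⟩ := htree.existsUnique_path u v
  have hlen := part1 u v huv ⟨p, hp⟩
  have hlenp : p.length ≤ 2 := by
    have := SimpleGraph.Walk.length_support p
    simp only at hlen
    omega
  match p, hp, hunique with
  | SimpleGraph.Walk.nil, hp, _ => exact absurd rfl huv.ne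
  | SimpleGraph.Walk.cons h SimpleGraph.Walk.nil, hp, _ => exact absurd h hTuv
  | SimpleGraph.Walk.cons (v := w) h1 (SimpleGraph.Walk.cons (v := w2) h2 r), hp, hunique =>
    cases r with
    | cons h3 r' =>
      exfalso
      simp only [SimpleGraph.Walk.length_cons] at hlenp
      omega
    | nil =>
      refine ⟨w, ⟨h1, h2⟩, ?_⟩
      intro w' ⟨h1', h2'⟩
      have hw'path : (SimpleGraph.Walk.cons h1' (SimpleGraph.Walk.cons h2'
          SimpleGraph.Walk.nil) : T.Walk u v).IsPath := by
        apply SimpleGraph.Walk.IsPath.cons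
        · exact (SimpleGraph.Walk.IsPath.nil).cons (by simpa using h2'.ne)
        · simp [huv.ne, h1'.ne]
      have heq := hunique _ hw'path
      simp only [SimpleGraph.Walk.cons.injEq] at heq
      exact heq.1
end

section
/- Let G be a K4-free graph with a spanning tree T such that for every edge uv of G every internal vertex of the tree path from u to v in T is adjacent to both u and v. Then for every chordless (induced) cycle C of G with at least 4 vertices, there exists a vertex w of G adjacent to all vertices of C, and moreover no edge of C is an edge of T. -/
open SimpleGraph

/-- `f` describes a chordless (induced) cycle on `k` vertices in `G`:
it is injective and two vertices of the cycle are adjacent iff they are consecutive. -/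
def IsInducedCycleOn {V : Type*} (G : SimpleGraph V) {k : ℕ} (f : ZMod k → V) : Prop :=
  Function.Injective f ∧ ∀ i j : ZMod k, G.Adj (f i) (f j) ↔ (j = i + 1 ∨ i = j + 1)

/-- If an edge `uv` of `G` is not an edge of `T`, then any `T`-path between `u` and `v`
whose internal vertices are all `G`-adjacent to both ends has a midpoint (using `K₄`-freeness). -/
lemma mid_aux {V : Type*} (G T : SimpleGraph V) (hK4 : G.CliqueFree 4)
    (hpath : ∀ u v : V, G.Adj u v → ∀ p : T.Path u v, ∀ w ∈ p.1.support,
      w ≠ u → w ≠ v → G.Adj u w ∧ G.Adj v w)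
    {u v : V} (huv : G.Adj u v) (hT : ¬ T.Adj u v) (P : T.Walk u v) (hP : P.IsPath) :
    ∃ m, T.Adj u m ∧ T.Adj m v ∧ G.Adj u m ∧ G.Adj v m := by
  classical
  cases P with
  | nil => exact absurd rfl huv.ne
  | cons h p =>
    rename_i a
    cases p with
    | nil => exact absurd h hT
    | cons h2 q =>
      rename_i b
      cases q with
      | nil =>
        -- path u - a - v
        have hmem : a ∈ (Walk.cons h (Walk.cons h2 Walk.nil)).support := by simp
        have hau : a ≠ u := h.ne'
        have hav : a ≠ v := h2.ne
        obtain ⟨h3, h4⟩ := hpath u v huv ⟨_, hP⟩ a hmem hau hav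
        exact ⟨a, h, h2, h3, h4⟩
      | cons h3 r =>
        rename_i c
        exfalso
        -- P = u - a - b - c - ... - v, with a,b internal; derive a K4 on {u,v,a,b}
        have hsup : (Walk.cons h (Walk.cons h2 (Walk.cons h3 r))).support
            = u :: a :: b :: r.support := by simp
        have hnodup := hP.support_nodup
        rw [hsup] at hnodup
        have hvr : v ∈ r.support := r.end_mem_support
        simp only [List.nodup_cons, List.mem_cons] at hnodup
        push_neg at hnodup
        obtain ⟨⟨hu1, hu2, hu3⟩, ⟨ha1, ha2⟩, hb', _⟩ := hnodup
        have hau : a ≠ u := Ne.symm hu1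
        have hbu : b ≠ u := Ne.symm hu2
        have hav : a ≠ v := fun e => (ha2 (e ▸ hvr)).elim
        have hbv : b ≠ v := fun e => (hb' (e ▸ hvr)).elim
        have hab : a ≠ b := ha1
        have hamem : a ∈ (Walk.cons h (Walk.cons h2 (Walk.cons h3 r))).support := by
          rw [hsup]; simp
        have hbmem : b ∈ (Walk.cons h (Walk.cons h2 (Walk.cons h3 r))).support := by
          rw [hsup]; simp
        obtain ⟨hua, hva⟩ := hpath u v huv ⟨_, hP⟩ a hamem hau hav
        obtain ⟨hub, hvb⟩ := hpath u v huv ⟨_, hP⟩ b hbmem hbu hbv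
        -- tail path from a to v
        have hPtail : (Walk.cons h2 (Walk.cons h3 r)).IsPath :=
          ((Walk.cons_isPath_iff _ _).1 hP).1
        have hbmem' : b ∈ (Walk.cons h2 (Walk.cons h3 r)).support := by simp
        obtain ⟨hab', _⟩ := hpath a v hva.symm ⟨_, hPtail⟩ b hbmem' (Ne.symm hab) hbv
        -- now {u, v, a, b} is a 4-clique
        apply hK4 {u, v, a, b}
        constructor
        · have huv' := huv.symm
          have hau' := hua.symm
          have hbu' := hub.symm
          have hav' := hva.symm
          have hbv' := hvb.symm
          have hba' := hab'.symm
          intro x hx y hy hxy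
          simp only [Finset.coe_insert, Set.mem_insert_iff, Finset.coe_singleton,
            Set.mem_singleton_iff] at hx hy
          rcases hx with rfl | rfl | rfl | rfl <;> rcases hy with rfl | rfl | rfl | rfl <;>
            first
              | exact absurd rfl hxy
              | assumption
        · have h1 : u ∉ ({v, a, b} : Finset V) := by
            simp only [Finset.mem_insert, Finset.mem_singleton]
            push_neg
            exact ⟨huv.ne, Ne.symm hau, Ne.symm hbu⟩
          have h2 : v ∉ ({a, b} : Finset V) := by
            simp only [Finset.mem_insert, Finset.mem_singleton]
            push_neg
            exact ⟨Ne.symm hav, Ne.symm hbv⟩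
          have h3 : a ∉ ({b} : Finset V) := by simpa using hab
          rw [Finset.card_insert_of_notMem h1, Finset.card_insert_of_notMem h2,
            Finset.card_insert_of_notMem h3, Finset.card_singleton]

theorem stmt_4 {V : Type*} [Fintype V] (G T : SimpleGraph V)
    (hGconn : G.Connected) (hK4 : G.CliqueFree 4) (hsub : T ≤ G) (htree : T.IsTree)
    (hpath : ∀ u v : V, G.Adj u v → ∀ p : T.Path u v, ∀ w ∈ p.1.support,
      w ≠ u → w ≠ v → G.Adj u w ∧ G.Adj v w) :
    ∀ (k : ℕ), 4 ≤ k → ∀ f : ZMod k → V, IsInducedCycleOn G f →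
      (∃ w : V, ∀ i : ZMod k, G.Adj w (f i)) ∧
      (∀ i : ZMod k, ¬ T.Adj (f i) (f (i + 1))) := by
  classical
  intro k hk f hf
  obtain ⟨hinj, hadj⟩ := hf
  haveI : NeZero k := ⟨by omega⟩
  -- small nonzero casts
  have hsmall : ∀ n : ℕ, 0 < n → n < k → ((n : ZMod k) ≠ 0) := by
    intro n h1 h2 h
    rw [ZMod.natCast_eq_zero_iff] at h
    exact absurd (Nat.le_of_dvd h1 h) (by omega)
  have hk1 : (1 : ZMod k) ≠ 0 := by exact_mod_cast hsmall 1 (by omega) (by omega)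
  have hk2 : (2 : ZMod k) ≠ 0 := by exact_mod_cast hsmall 2 (by omega) (by omega)
  have hk3 : (3 : ZMod k) ≠ 0 := by exact_mod_cast hsmall 3 (by omega) (by omega)
  have hfne : ∀ a d : ZMod k, d ≠ 0 → f a ≠ f (a + d) := by
    intro a d hd h
    exact hd (left_eq_add.mp (hinj h))
  -- a common G-neighbor of two consecutive cycle vertices is off the cycle
  have hoff : ∀ (j : ZMod k) (x : V), G.Adj (f j) x → G.Adj (f (j + 1)) x →
      ∀ l : ZMod k, x ≠ f l := by
    intro j x h1 h2 l hx
    subst hx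
    rcases (hadj j l).1 h1 with h | h <;> rcases (hadj (j + 1) l).1 h2 with h' | h'
    · exact hk1 (left_eq_add.mp (h.symm.trans h'))
    · have hj : j = l := add_right_cancel h'
      rw [hj] at h
      exact hk1 (left_eq_add.mp h)
    · have h3 : j = j + 3 := by linear_combination h + h'
      exact hk3 (left_eq_add.mp h3)
    · have hj : j = l := add_right_cancel h'
      rw [← hj] at h
      exact hk1 (left_eq_add.mp h)
  -- uniqueness of paths in the tree
  have huniq : ∀ {a b : V} (p q : T.Walk a b), p.IsPath → q.IsPath → p = q := by
    intro a b p q hp hq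
    obtain ⟨r, -, hr⟩ := htree.existsUnique_path a b
    rw [hr p hp, hr q hq]
  -- tree path of a G-edge, with the adjacency property for internal vertices
  have hstep : ∀ u v : V, G.Adj u v → ∃ P : T.Walk u v, P.IsPath ∧
      ∀ x ∈ P.support, x ≠ u → x ≠ v → G.Adj u x ∧ G.Adj v x := by
    intro u v huv
    obtain ⟨w⟩ := htree.isConnected.preconnected u v
    exact ⟨w.toPath.1, w.toPath.2, fun x hx => hpath u v huv w.toPath x hx⟩
  -- contradiction scheme: a walk avoiding z, but the unique path passes through z
  have hcontra : ∀ {a b : V} (W : T.Walk a b) (z : V), (∀ x ∈ W.support, x ≠ z) →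
      ∀ Q : T.Walk a b, Q.IsPath → z ∈ Q.support → False := by
    intro a b W z hW Q hQ hz
    have h1 := huniq W.bypass Q W.bypass_isPath hQ
    rw [← h1] at hz
    exact hW z (W.support_bypass_subset hz) rfl
  -- separation walk: from f (i+2) to f i avoiding f (i+1)
  have hsep : ∀ i : ZMod k, ∃ W : T.Walk (f (i + 2)) (f i),
      ∀ x ∈ W.support, x ≠ f (i + 1) := by
    intro i
    have key : ∀ n : ℕ, n ≤ k - 2 → ∃ W : T.Walk (f (i + 2)) (f (i + 2 + (n : ZMod k))),
        ∀ x ∈ W.support, x ≠ f (i + 1) := by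
      intro n
      induction n with
      | zero =>
        intro _
        refine ⟨Walk.nil.copy rfl (by norm_num), ?_⟩
        intro x hx
        rw [Walk.support_copy] at hx
        simp only [Walk.support_nil, List.mem_singleton] at hx
        subst hx
        intro h
        have := hinj h
        have h21 : (2 : ZMod k) = 1 := by
          have := add_left_cancel this
          exact this
        exact hk1 (by linear_combination h21)
      | succ n ih =>
        intro hn
        obtain ⟨W, hW⟩ := ih (by omega)
        have hGadj : G.Adj (f (i + 2 + (n : ZMod k))) (f (i + 2 + (n : ZMod k) + 1)) :=
          (hadj _ _).2 (Or.inl rfl)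
        obtain ⟨P, hPp, hPprop⟩ := hstep _ _ hGadj
        refine ⟨(W.append P).copy rfl (by congr 1; push_cast; ring), ?_⟩
        intro x hx
        rw [Walk.support_copy, Walk.mem_support_append_iff] at hx
        rcases hx with hx | hx
        · exact hW x hx
        · by_cases hx1 : x = f (i + 2 + (n : ZMod k))
          · subst hx1
            intro h
            have h' := hinj h
            have : ((n + 1 : ℕ) : ZMod k) = 0 := by
              push_cast
              linear_combination h'
            exact hsmall (n + 1) (by omega) (by omega) this
          · by_cases hx2 : x = f (i + 2 + (n : ZMod k) + 1)
            · subst hx2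
              intro h
              have h' := hinj h
              have : ((n + 2 : ℕ) : ZMod k) = 0 := by
                push_cast
                linear_combination h'
              exact hsmall (n + 2) (by omega) (by omega) this
            · obtain ⟨ha1, ha2⟩ := hPprop x hx hx1 hx2
              exact hoff _ x ha1 ha2 (i + 1)
    obtain ⟨W, hW⟩ := key (k - 2) le_rfl
    have hcast : i + 2 + ((k - 2 : ℕ) : ZMod k) = i := by
      have : ((k - 2 : ℕ) : ZMod k) = -2 := by
        rw [Nat.cast_sub (by omega : 2 ≤ k)]
        simp [ZMod.natCast_self]
      rw [this]; ring
    exact ⟨W.copy rfl (by rw [hcast]), by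
      intro x hx
      rw [Walk.support_copy] at hx
      exact hW x hx⟩
  -- no edge of the cycle is a tree edge
  have hA : ∀ i : ZMod k, ¬ T.Adj (f i) (f (i + 1)) := by
    intro i hTi
    obtain ⟨W, hW⟩ := hsep i
    have hGadj : G.Adj (f (i + 1)) (f (i + 1 + 1)) := (hadj _ _).2 (Or.inl rfl)
    obtain ⟨P, hPp, hPprop⟩ := hstep _ _ hGadj
    have e2 : i + 1 + 1 = i + 2 := by ring
    let Q : T.Walk (f i) (f (i + 2)) := (Walk.cons hTi P).copy rfl (by rw [e2])
    have hQ : Q.IsPath := by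
      rw [Walk.isPath_copy, Walk.cons_isPath_iff]
      refine ⟨hPp, ?_⟩
      intro hmem
      by_cases h1 : f i = f (i + 1)
      · exact hfne i 1 hk1 h1
      · by_cases h2 : f i = f (i + 1 + 1)
        · rw [e2] at h2
          exact hfne i 2 hk2 h2
        · obtain ⟨ha1, ha2⟩ := hPprop (f i) hmem h1 h2
          exact hoff (i + 1) (f i) ha1 ha2 i rfl
    have hz : f (i + 1) ∈ Q.support := by
      show f (i + 1) ∈ ((Walk.cons hTi P).copy rfl _).support
      rw [Walk.support_copy, Walk.support_cons]
      exact List.mem_cons_of_mem _ P.start_mem_support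
    refine hcontra W.reverse (f (i + 1)) ?_ Q hQ hz
    intro x hx
    rw [Walk.support_reverse, List.mem_reverse] at hx
    exact hW x hx
  -- each cycle edge has a midpoint in the tree
  have hmid : ∀ i : ZMod k, ∃ m : V, T.Adj (f i) m ∧ T.Adj m (f (i + 1)) ∧
      G.Adj (f i) m ∧ G.Adj (f (i + 1)) m ∧ ∀ l : ZMod k, m ≠ f l := by
    intro i
    have huv : G.Adj (f i) (f (i + 1)) := (hadj _ _).2 (Or.inl rfl)
    obtain ⟨P, hPp, _⟩ := hstep _ _ huv
    obtain ⟨m, hm1, hm2, hm3, hm4⟩ := mid_aux G T hK4 hpath huv (hA i) P hPp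
    exact ⟨m, hm1, hm2, hm3, hm4, fun l => hoff i m hm3 hm4 l⟩
  choose m hT1 hT2 hG1 hG2 hOff using hmid
  -- consecutive midpoints coincide
  have hstep2 : ∀ i : ZMod k, m i = m (i + 1) := by
    intro i
    by_contra hne
    obtain ⟨W, hW⟩ := hsep i
    have e2 : i + 1 + 1 = i + 2 := by ring
    have hT2' : T.Adj (m (i + 1)) (f (i + 2)) := by rw [← e2]; exact hT2 (i + 1)
    let Q : T.Walk (f i) (f (i + 2)) :=
      Walk.cons (hT1 i) (Walk.cons (hT2 i) (Walk.cons (hT1 (i + 1)) (Walk.cons hT2' Walk.nil)))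
    have hQ : Q.IsPath := by
      have d1 : f i ≠ m i := (hOff i i).symm
      have d2 : f i ≠ f (i + 1) := hfne i 1 hk1
      have d3 : f i ≠ m (i + 1) := (hOff (i + 1) i).symm
      have d4 : f i ≠ f (i + 2) := hfne i 2 hk2
      have d5 : m i ≠ f (i + 1) := hOff i (i + 1)
      have d6 : m i ≠ m (i + 1) := hne
      have d7 : m i ≠ f (i + 2) := hOff i (i + 2)
      have d8 : f (i + 1) ≠ m (i + 1) := (hOff (i + 1) (i + 1)).symm
      have d9 : f (i + 1) ≠ f (i + 2) := by
        have := hfne (i + 1) 1 hk1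
        rwa [e2] at this
      have d10 : m (i + 1) ≠ f (i + 2) := hOff (i + 1) (i + 2)
      simp [Q, Walk.isPath_def, Walk.support_cons, List.nodup_cons, d1, d2, d3, d4, d5,
        d6, d7, d8, d9, d10]
    have hz : f (i + 1) ∈ Q.support := by
      simp [Q, Walk.support_cons]
    refine hcontra W.reverse (f (i + 1)) ?_ Q hQ hz
    intro x hx
    rw [Walk.support_reverse, List.mem_reverse] at hx
    exact hW x hx
  -- all midpoints coincide
  have hnat : ∀ n : ℕ, m (n : ZMod k) = m 0 := by
    intro n
    induction n with
    | zero => norm_num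
    | succ n ih =>
      push_cast
      rw [← hstep2 (n : ZMod k)]
      exact ih
  refine ⟨⟨m 0, ?_⟩, hA⟩
  intro i
  have hi : m i = m 0 := by
    conv_lhs => rw [← ZMod.natCast_zmod_val i]
    exact hnat i.val
  rw [← hi]
  exact (hG1 i).symm
end

section
/- The complement of a chordless cycle on k vertices is not 3-colourable for any k ≥ 7. -/
/-
Each colour class of a proper colouring of the complement `Gᶜ` is a clique of `G`. The cycle
`C_k` (for `k ≠ 3`) has no triangles, so each of the three colour classes of a colouring of its
complement has at most two vertices, and only `k ≤ 6` vertices can be covered.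
-/

open SimpleGraph

/-- The cycle graph on `ZMod k`: distinct vertices are adjacent iff consecutive. -/
def cycleGraph' (k : ℕ) : SimpleGraph (ZMod k) where
  Adj i j := i ≠ j ∧ (j = i + 1 ∨ i = j + 1)
  symm := ⟨by rintro i j ⟨hne, h | h⟩ <;> exact ⟨hne.symm, by tauto⟩⟩
  loopless := ⟨by rintro i ⟨hne, _⟩; exact hne rfl⟩

open Finset

namespace SimpleGraph

variable {V : Type*} {G : SimpleGraph V}

theorem IsClique.card_le_of_cliqueFree {m : ℕ} {s : Finset V} (hG : G.CliqueFree (m + 1))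
    (hs : G.IsClique s) : #s ≤ m := by
  by_contra! hlt
  obtain ⟨t, hts, ht⟩ := Finset.exists_subset_card_eq (Nat.succ_le_of_lt hlt)
  exact hG t ⟨hs.subset (by exact_mod_cast hts), ht⟩

theorem card_le_mul_of_cliqueFree_of_compl_colorable [Fintype V] {m n : ℕ}
    (hG : G.CliqueFree (m + 1)) (hc : Gᶜ.Colorable n) : Fintype.card V ≤ n * m := by
  obtain ⟨C⟩ := hc
  by_contra! hlt
  obtain ⟨y, hy⟩ := Fintype.exists_lt_card_fiber_of_mul_lt_card C (by simpa using hlt)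
  have hclique : G.IsClique ({x | C x = y} : Finset V) := by
    rw [← isIndepSet_compl]
    simpa [Coloring.colorClass] using C.isIndepSet_colorClass y
  exact (hclique.card_le_of_cliqueFree hG).not_gt hy

end SimpleGraph

theorem cycleGraph'_cliqueFree_three {k : ℕ} (hk : k ≠ 3) : (cycleGraph' k).CliqueFree 3 := by
  rintro s hs
  obtain ⟨a, b, c, ⟨hab, eab⟩, ⟨hac, eac⟩, ⟨hbc, ebc⟩, -⟩ := is3Clique_iff.mp hs
  have h1 : (1 : ZMod k) ≠ 0 := fun h => by grind
  have h3 : (3 : ZMod k) ≠ 0 := by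
    intro h
    have hdvd : k ∣ 3 := (ZMod.natCast_eq_zero_iff 3 k).mp (by exact_mod_cast h)
    rcases (Nat.dvd_prime Nat.prime_three).mp hdvd with rfl | rfl
    · exact h1 (Subsingleton.elim _ _)
    · exact hk rfl
  -- `b - a`, `c - b` and `c - a` are each `±1`, which forces `1 = 0` or `3 = 0`.
  grind

theorem stmt_7 (k : ℕ) (hk : 7 ≤ k) : ¬ (cycleGraph' k)ᶜ.Colorable 3 := by
  intro hc
  have : NeZero k := ⟨by omega⟩
  have hcard := card_le_mul_of_cliqueFree_of_compl_colorable
    (cycleGraph'_cliqueFree_three (by omega)) hc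
  rw [ZMod.card] at hcard
  omega
end

section
/- Let G be a dually chordal graph (G has a spanning tree T such that for every edge uv of G every internal vertex of the T-path from u to v is adjacent to both u and v). If G is 3-colourable, then G contains no odd induced cycle of length at least 5 and no induced complement of a cycle of length at least 5; consequently (by the Strong Perfect Graph Theorem) G is perfect. -/
open SimpleGraph

/-- `f` describes an induced copy of the complement of a cycle on `k` vertices in `G`. -/
def IsInducedAnticycleOn {V : Type*} (G : SimpleGraph V) {k : ℕ} (f : ZMod k → V) : Prop :=
  Function.Injective f ∧
    ∀ i j : ZMod k, G.Adj (f i) (f j) ↔ (i ≠ j ∧ ¬ (j = i + 1 ∨ i = j + 1))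

/-- A graph is perfect if every induced subgraph has chromatic number
equal to its clique number. -/
def IsPerfect {V : Type*} (G : SimpleGraph V) : Prop :=
  ∀ s : Set V, (G.induce s).chromaticNumber = ((G.induce s).cliqueNum : ℕ∞)

/-!
A 3-colourable graph is `K₄`-free, so if `T` is a dually chordal spanning tree of `G`, the `T`-path
between the ends of an edge of `G` has length at most 2. Along a hole of length at least 4, the
`T`-path between two consecutive hole vertices contains no other hole vertex. Concatenated, these
paths form a closed walk in the tree, which must traverse the first edge of each path a second time;
only the preceding path can do so. Hence all these paths have length 2 and share their middle
vertex, which is adjacent to the whole hole. An odd hole together with a vertex adjacent to all of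
it needs 4 colours. The complement of `C₅` is `C₅`; the complement of `C₆` contains an induced `C₄`
whose common neighbour gets the third colour of both triangles of the prism, which are joined by
an edge; the complement of `C_k` for `k ≥ 7` has no independent set of size 3. For perfection,
cliques have size at most 3, and a triangle-free induced subgraph is bipartite, because a shortest
odd closed walk is an induced odd cycle.
-/

theorem ZMod.natCast_ne_zero_of_lt {n k : ℕ} (h0 : 0 < n) (hn : n < k) : (n : ZMod k) ≠ 0 := by
  rw [Ne, ZMod.natCast_eq_zero_iff]
  exact Nat.not_dvd_of_pos_of_lt h0 hn

theorem ZMod.forall_of_add_one {k : ℕ} [NeZero k] {P : ZMod k → Prop} (a : ZMod k) (ha : P a)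
    (h : ∀ j, P j → P (j + 1)) (i : ZMod k) : P i := by
  have hnat : ∀ t : ℕ, P (a + t) := by
    intro t
    induction t with
    | zero => simpa using ha
    | succ t ih => simpa [add_assoc] using h _ ih
  simpa using hnat (i - a).val

theorem ZMod.val_add_one {n : ℕ} [NeZero n] (t : ZMod n) : (t + 1).val = (t.val + 1) % n := by
  rcases eq_or_ne n 1 with rfl | hn
  · simp [Subsingleton.elim (t + 1) 0, Nat.mod_one]
  · rw [ZMod.val_add, ZMod.val_one'' hn]

theorem ZMod.eq_or_eq_add_one_or_exists {n : ℕ} [NeZero n] (i j : ZMod n) :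
    j = i ∨ j = i + 1 ∨ i = j + 1 ∨ ∃ a : ℕ, 2 ≤ a ∧ a + 2 ≤ n ∧ j = i + a := by
  have hj : j = i + ((j - i).val : ZMod n) := by rw [ZMod.natCast_zmod_val]; ring
  have hlt := (j - i).val_lt
  obtain h | h | h | h : (j - i).val = 0 ∨ (j - i).val = 1 ∨ (j - i).val + 1 = n ∨
      (2 ≤ (j - i).val ∧ (j - i).val + 2 ≤ n) := by omega
  · left; rw [hj, h]; simp
  · right; left; rw [hj, h]; simp
  · right; right; left
    have hn : (((j - i).val + 1 : ℕ) : ZMod n) = 0 := by rw [h]; exact ZMod.natCast_self n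
    push_cast at hn
    linear_combination -hj - hn
  · exact Or.inr (Or.inr (Or.inr ⟨_, h.1, h.2, hj⟩))

namespace SimpleGraph

variable {W : Type*} {H : SimpleGraph W}

def IsClosedWalkOn (H : SimpleGraph W) {n : ℕ} (g : ZMod n → W) : Prop :=
  ∀ i, H.Adj (g i) (g (i + 1))

theorem Walk.isClosedWalkOn_getVert {u : W} (w : H.Walk u u) [NeZero w.length] :
    H.IsClosedWalkOn fun t : ZMod w.length => w.getVert t.val := by
  intro t
  have ht := t.val_lt
  dsimp only
  rw [ZMod.val_add_one]
  obtain h | h : t.val + 1 < w.length ∨ t.val + 1 = w.length := by omega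
  · rw [Nat.mod_eq_of_lt h]
    exact w.adj_getVert_succ ht
  · rw [h, Nat.mod_self, Walk.getVert_zero]
    simpa [h] using w.adj_getVert_succ ht

namespace IsClosedWalkOn

variable {n : ℕ} {g : ZMod n → W}

theorem exists_isClosedWalkOn_of_adj_add (hg : H.IsClosedWalkOn g) (i : ZMod n) (a : ℕ)
    (ha : H.Adj (g (i + a)) (g i)) : ∃ g' : ZMod (a + 1) → W, H.IsClosedWalkOn g' := by
  refine ⟨fun t => g (i + t.val), fun t => ?_⟩
  have ht := t.val_lt
  dsimp only
  rw [ZMod.val_add_one]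
  obtain h | h : t.val + 1 < a + 1 ∨ t.val + 1 = a + 1 := by omega
  · rw [Nat.mod_eq_of_lt h]
    simpa [add_assoc] using hg (i + t.val)
  · rw [h, Nat.mod_self]
    simpa [show t.val = a by omega] using ha

theorem isInducedCycleOn [NeZero n] (hg : H.IsClosedWalkOn g)
    (hchord : ∀ i (a : ℕ), 2 ≤ a → a + 2 ≤ n → g (i + a) ≠ g i ∧ ¬ H.Adj (g (i + a)) (g i)) :
    IsInducedCycleOn H g := by
  refine ⟨fun i j hij => ?_, fun i j => ⟨fun hadj => ?_, ?_⟩⟩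
  · rcases ZMod.eq_or_eq_add_one_or_exists i j with h | rfl | rfl | ⟨a, ha, han, rfl⟩
    · exact h.symm
    · exact absurd hij (hg i).ne
    · exact absurd hij.symm (hg j).ne
    · exact absurd hij.symm (hchord i a ha han).1
  · rcases ZMod.eq_or_eq_add_one_or_exists i j with rfl | h | h | ⟨a, ha, han, rfl⟩
    · exact absurd rfl hadj.ne
    · exact Or.inl h
    · exact Or.inr h
    · exact absurd hadj.symm (hchord i a ha han).2
  · rintro (rfl | rfl)
    · exact hg i
    · exact (hg j).symm

theorem exists_odd_lt_of_eq (hn : Odd n) (hg : H.IsClosedWalkOn g) (i : ZMod n) (a : ℕ)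
    (ha : 2 ≤ a) (han : a + 2 ≤ n) (h : g (i + a) = g i) :
    ∃ m < n, Odd m ∧ ∃ g' : ZMod m → W, H.IsClosedWalkOn g' := by
  obtain ⟨c, rfl⟩ : ∃ c, a = c + 1 + 1 := ⟨a - 2, by omega⟩
  obtain ⟨d, rfl⟩ : ∃ d, n = c + 1 + 1 + (d + 1 + 1) := ⟨n - c - 4, by omega⟩
  have hN := ZMod.natCast_self (c + 1 + 1 + (d + 1 + 1))
  push_cast at h hN
  obtain ⟨g₁, hg₁⟩ := hg.exists_isClosedWalkOn_of_adj_add i (c + 1) (by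
    simpa [← h, add_assoc] using hg (i + (c + 1 : ℕ)))
  obtain ⟨g₂, hg₂⟩ := hg.exists_isClosedWalkOn_of_adj_add (i + (c + 1 + 1 : ℕ)) (d + 1) (by
    have := hg (i - 1)
    push_cast
    rwa [sub_add_cancel, ← h, show i - 1 = i + (c + 1 + 1) + (d + 1) by linear_combination -hN]
      at this)
  rcases Nat.even_or_odd c with hc | hc
  · exact ⟨_, by omega, by rw [Nat.odd_iff] at hn ⊢; rw [Nat.even_iff] at hc; omega, g₂, hg₂⟩
  · exact ⟨_, by omega, by rw [Nat.odd_iff] at hc ⊢; omega, g₁, hg₁⟩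

theorem exists_odd_lt_of_adj (hn : Odd n) (hg : H.IsClosedWalkOn g) (i : ZMod n) (a : ℕ)
    (ha : 2 ≤ a) (han : a + 2 ≤ n) (h : H.Adj (g (i + a)) (g i)) :
    ∃ m < n, Odd m ∧ ∃ g' : ZMod m → W, H.IsClosedWalkOn g' := by
  obtain ⟨d, rfl⟩ : ∃ d, n = a + (d + 1 + 1) := ⟨n - a - 2, by omega⟩
  have hN := ZMod.natCast_self (a + (d + 1 + 1))
  push_cast at hN
  obtain ⟨g₁, hg₁⟩ := hg.exists_isClosedWalkOn_of_adj_add i a h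
  obtain ⟨g₂, hg₂⟩ := hg.exists_isClosedWalkOn_of_adj_add (i + a) (d + 1 + 1) (by
    push_cast
    rw [show i + a + (d + 1 + 1) = i by linear_combination hN]
    exact h.symm)
  rcases Nat.even_or_odd a with ha | ha
  · exact ⟨_, by omega, by rw [Nat.odd_iff] at hn ⊢; rw [Nat.even_iff] at ha; omega, g₁, hg₁⟩
  · exact ⟨_, by omega, by rw [Nat.odd_iff] at hn ha ⊢; omega, g₂, hg₂⟩

theorem exists_isInducedCycleOn (hn : Odd n) (hg : H.IsClosedWalkOn g) :
    ∃ m, Odd m ∧ 3 ≤ m ∧ ∃ f : ZMod m → W, IsInducedCycleOn H f := by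
  induction n using Nat.strong_induction_on with | _ n ih
  have : NeZero n := ⟨hn.pos.ne'⟩
  by_cases hchord : ∀ i (a : ℕ), 2 ≤ a → a + 2 ≤ n → g (i + a) ≠ g i ∧ ¬ H.Adj (g (i + a)) (g i)
  · have hn1 : n ≠ 1 := by
      rintro rfl
      exact (hg 0).ne (congrArg g (Subsingleton.elim _ _))
    exact ⟨n, hn, by obtain ⟨m, rfl⟩ := hn; omega, g, hg.isInducedCycleOn hchord⟩
  push Not at hchord
  obtain ⟨i, a, ha, han, h⟩ := hchord
  obtain ⟨m, hm, hmo, g', hg'⟩ : ∃ m < n, Odd m ∧ ∃ g' : ZMod m → W, H.IsClosedWalkOn g' := by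
    by_cases heq : g (i + a) = g i
    · exact hg.exists_odd_lt_of_eq hn i a ha han heq
    · exact hg.exists_odd_lt_of_adj hn i a ha han (h heq)
  exact ih m hm hmo hg'

end IsClosedWalkOn

theorem colorable_two_of_forall_not_isInducedCycleOn
    (h : ∀ m, Odd m → 3 ≤ m → ∀ f : ZMod m → W, ¬ IsInducedCycleOn H f) : H.Colorable 2 := by
  refine two_colorable_iff_forall_loop_even.2 fun u w => Nat.not_odd_iff_even.1 fun hw => ?_
  have : NeZero w.length := ⟨hw.pos.ne'⟩
  obtain ⟨m, hm, hm3, f, hf⟩ := w.isClosedWalkOn_getVert.exists_isInducedCycleOn hw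
  exact h m hm hm3 f hf

theorem colorable_cliqueNum [Finite W] (h3 : H.Colorable 3) (h2 : H.CliqueFree 3 → H.Colorable 2) :
    H.Colorable H.cliqueNum := by
  have hfree : H.CliqueFree (H.cliqueNum + 1) := fun s hs => by
    have := hs.isClique.card_le_cliqueNum
    rw [hs.card_eq] at this
    omega
  obtain h | h | h | h : H.cliqueNum = 0 ∨ H.cliqueNum = 1 ∨ H.cliqueNum = 2 ∨ 3 ≤ H.cliqueNum := by
    omega
  · rw [h] at hfree ⊢
    exact colorable_zero_iff.2 (cliqueFree_one.1 hfree)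
  · rw [h] at hfree ⊢
    exact colorable_one_iff.2 (cliqueFree_two.1 hfree)
  · rw [h] at hfree ⊢
    exact h2 hfree
  · exact h3.mono h

end SimpleGraph

theorem IsInducedCycleOn.isClosedWalkOn {V : Type*} {G : SimpleGraph V} {k : ℕ} {f : ZMod k → V}
    (hf : IsInducedCycleOn G f) : G.IsClosedWalkOn f :=
  fun i => (hf.2 i (i + 1)).2 (Or.inl rfl)

theorem IsInducedCycleOn.isNClique_three {V : Type*} {G : SimpleGraph V} [DecidableEq V]
    {f : ZMod 3 → V} (hf : IsInducedCycleOn G f) : G.IsNClique 3 {f 0, f 1, f 2} :=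
  is3Clique_triple_iff.2
    ⟨(hf.2 0 1).2 (by decide), (hf.2 0 2).2 (by decide), (hf.2 1 2).2 (by decide)⟩

theorem isPerfect_of_colorable_three {V : Type*} [Finite V] {G : SimpleGraph V}
    (hcol : G.Colorable 3)
    (hhole : ∀ k, Odd k → 5 ≤ k → ∀ f : ZMod k → V, ¬ IsInducedCycleOn G f) : IsPerfect G := by
  classical
  intro s
  have h2 : (G.induce s).CliqueFree 3 → (G.induce s).Colorable 2 := fun htri =>
    colorable_two_of_forall_not_isInducedCycleOn fun m hm hm3 f hf => by
      obtain rfl | hm5 : m = 3 ∨ 5 ≤ m := by obtain ⟨m, rfl⟩ := hm; omega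
      · exact htri _ hf.isNClique_three
      · exact hhole m hm hm5 (Subtype.val ∘ f) ⟨Subtype.val_injective.comp hf.1, hf.2⟩
  have hcolor := colorable_cliqueNum (hcol.of_hom (Embedding.induce s).toHom) h2
  exact le_antisymm hcolor.chromaticNumber_le cliqueNum_le_chromaticNumber

namespace SimpleGraph

variable {V : Type*} {G T : SimpleGraph V}

theorem Reachable.of_forall_ne_add_one {k : ℕ} [NeZero k] {f : ZMod k → V} {i : ZMod k}
    (h : ∀ j ≠ i, G.Reachable (f j) (f (j + 1))) : G.Reachable (f (i + 1)) (f i) := by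
  by_contra hi
  refine hi (ZMod.forall_of_add_one (P := fun j => G.Reachable (f (i + 1)) (f j)) (i + 1) .rfl
    (fun j hj => ?_) i)
  exact hj.trans (h j (by rintro rfl; exact hi hj))

theorem IsAcyclic.exists_ne_mem_edges {k : ℕ} [NeZero k] (hT : T.IsAcyclic) {f : ZMod k → V}
    (P : ∀ j, T.Walk (f j) (f (j + 1))) {i : ZMod k} (hP : (P i).IsPath) {e : Sym2 V}
    (he : e ∈ (P i).edges) : ∃ j ≠ i, e ∈ (P j).edges := by
  classical
  by_contra! h
  induction e using Sym2.ind with | _ x y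
  have hreach : (T.deleteEdges {s(x, y)}).Reachable (f i) (f (i + 1)) := by
    refine (Reachable.of_forall_ne_add_one fun j hj => ?_).symm
    exact reachable_deleteEdges_iff_exists_walk.2 ⟨P j, h j hj⟩
  obtain ⟨p, hp⟩ := reachable_deleteEdges_iff_exists_walk.1 hreach
  have hbypass : p.bypass = P i :=
    congrArg Subtype.val ((hT.subsingleton_path _ _).elim ⟨_, p.bypass_isPath⟩ ⟨_, hP⟩)
  exact hp (p.edges_bypass_subset_edges (hbypass ▸ he))

structure IsDuallyChordalTree (G T : SimpleGraph V) : Prop where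
  le : T ≤ G
  isTree : T.IsTree
  adj_of_mem_support : ∀ u v : V, G.Adj u v → ∀ p : T.Path u v, ∀ w ∈ p.1.support,
    w ≠ u → w ≠ v → G.Adj u w ∧ G.Adj v w

theorem IsDuallyChordalTree.length_le_two (hT : G.IsDuallyChordalTree T) (hG : G.CliqueFree 4)
    {u v : V} (huv : G.Adj u v) {p : T.Walk u v} (hp : p.IsPath) : p.length ≤ 2 := by
  classical
  match p, hp with
  | .nil, _ => simp
  | .cons _ .nil, _ => simp
  | .cons _ (.cons _ .nil), _ => simp
  | .cons (v := x₁) h₁ (.cons (v := x₂) h₂ (.cons h₃ q)), hp =>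
    have hnd := hp.support_nodup
    simp only [Walk.support_cons, List.nodup_cons, List.mem_cons, not_or] at hnd
    have hv := q.end_mem_support
    have hcommon := hT.adj_of_mem_support u v huv ⟨_, hp⟩
    obtain ⟨hux₁, hvx₁⟩ := hcommon x₁ (by simp) h₁.ne.symm (by rintro rfl; exact hnd.2.1.2 hv)
    obtain ⟨hux₂, hvx₂⟩ :=
      hcommon x₂ (by simp) (Ne.symm hnd.1.2.1) (by rintro rfl; exact hnd.2.2.1 hv)
    have hclique : G.IsNClique 4 {u, x₁, x₂, v} :=
      (is3Clique_triple_iff.2 ⟨hT.le h₂, hvx₁.symm, hvx₂.symm⟩).insert (by simp [hux₁, hux₂, huv])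
    exact absurd hclique (hG _)

theorem IsDuallyChordalTree.eq_or_eq_add_one_of_mem_support (hT : G.IsDuallyChordalTree T)
    {k : ℕ} (hk : 4 ≤ k) {f : ZMod k → V} (hf : IsInducedCycleOn G f) {j l : ZMod k}
    {p : T.Walk (f j) (f (j + 1))} (hp : p.IsPath) (hl : f l ∈ p.support) :
    l = j ∨ l = j + 1 := by
  by_contra! h
  obtain ⟨h₁, h₂⟩ := hT.adj_of_mem_support _ _ (hf.isClosedWalkOn j) ⟨p, hp⟩ (f l) hl
    (hf.1.ne h.1) (hf.1.ne h.2)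
  rw [hf.2] at h₁ h₂
  rcases h₁ with h₁ | h₁
  · exact h.2 h₁
  rcases h₂ with h₂ | h₂
  · exact ZMod.natCast_ne_zero_of_lt (n := 3) (by norm_num) hk
      (by push_cast; linear_combination -h₁ - h₂)
  · exact h.1 (add_right_cancel h₂).symm

theorem IsDuallyChordalTree.exists_forall_adj_of_isInducedCycleOn (hT : G.IsDuallyChordalTree T)
    (hG : G.CliqueFree 4) {k : ℕ} (hk : 4 ≤ k) {f : ZMod k → V} (hf : IsInducedCycleOn G f) :
    ∃ a, ∀ i, T.Adj a (f i) := by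
  have : NeZero k := ⟨by omega⟩
  choose P hP using fun j : ZMod k =>
    hT.isTree.connected.preconnected.exists_isPath (f j) (f (j + 1))
  have hnil : ∀ j, ¬ (P j).Nil := fun j => Walk.not_nil_of_ne (hf.isClosedWalkOn j).ne
  have hmem := fun j l => hT.eq_or_eq_add_one_of_mem_support hk hf (hP j) (l := l)
  -- `P (j + 1)` leaves `f (j + 1)` through the edge by which `P j` enters it.
  have hsnd : ∀ j, (P (j + 1)).snd = (P j).penultimate := by
    intro j
    obtain ⟨l, hl, he⟩ := hT.isTree.isAcyclic.exists_ne_mem_edges P (hP (j + 1))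
      (Walk.mk_start_snd_mem_edges (hnil (j + 1)))
    obtain rfl : l = j := by
      rcases hmem l (j + 1) ((P l).fst_mem_support_of_mem_edges he) with h | h
      · exact absurd h.symm hl
      · exact (add_right_cancel h).symm
    exact hT.isTree.isAcyclic.eq_penultimate_of_adj_end (hP l) (Walk.adj_snd (hnil _))
      ((P l).snd_mem_support_of_mem_edges he)
  have hlen : ∀ j, (P j).length = 2 := by
    intro j
    obtain ⟨j, rfl⟩ : ∃ j', j = j' + 1 := ⟨j - 1, (sub_add_cancel j 1).symm⟩
    have hle := hT.length_le_two hG (hf.isClosedWalkOn (j + 1)) (hP (j + 1))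
    have h0 : (P (j + 1)).length ≠ 0 := fun h => hnil _ (Walk.length_eq_zero_iff.1 h)
    have h1 : (P (j + 1)).length ≠ 1 := by
      intro h1
      have : (P (j + 1)).snd = f (j + 1 + 1) := by rw [Walk.snd, ← h1, Walk.getVert_length]
      rcases hmem j (j + 1 + 1) (this ▸ hsnd j ▸ (P j).getVert_mem_support _) with h | h
      · exact ZMod.natCast_ne_zero_of_lt (n := 2) (k := k) (by norm_num) (by omega)
          (by push_cast; linear_combination h)
      · exact ZMod.natCast_ne_zero_of_lt (n := 1) (k := k) (by norm_num) (by omega)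
          (by push_cast; linear_combination h)
    omega
  have hconst : ∀ j, (P j).snd = (P 0).snd :=
    ZMod.forall_of_add_one (P := fun j => (P j).snd = (P 0).snd) 0 rfl fun j hj => by
      rw [hsnd, Walk.penultimate, hlen]; exact hj
  exact ⟨(P 0).snd, fun i => hconst i ▸ (Walk.adj_snd (hnil i)).symm⟩

end SimpleGraph

theorem fin_three_eq_of_ne {x y z w : Fin 3} (hxy : x ≠ y) (hzx : z ≠ x) (hzy : z ≠ y)
    (hwx : w ≠ x) (hwy : w ≠ y) : z = w := by
  revert x y z w
  decide

theorem SimpleGraph.IsClosedWalkOn.not_colorable_three_of_forall_adj {V : Type*}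
    {G : SimpleGraph V} {k : ℕ} (hk : Odd k) {f : ZMod k → V} (hf : G.IsClosedWalkOn f) {a : V}
    (ha : ∀ i, G.Adj a (f i)) : ¬ G.Colorable 3 := by
  rintro ⟨c⟩
  have hstep : ∀ i, c (f (i + 1 + 1)) = c (f i) := fun i =>
    fin_three_eq_of_ne (c.valid (ha (i + 1))).symm (c.valid (hf (i + 1))).symm
      (c.valid (ha _)).symm (c.valid (hf i)) (c.valid (ha i)).symm
  have heven : ∀ t : ℕ, c (f (2 * t : ℕ)) = c (f 0) := by
    intro t
    induction t with
    | zero => simp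
    | succ t ih =>
      rw [← ih, show ((2 * (t + 1) : ℕ) : ZMod k) = (2 * t : ℕ) + 1 + 1 by push_cast; ring]
      exact hstep _
  obtain ⟨m, rfl⟩ := hk
  have hN := ZMod.natCast_self (2 * m + 1)
  push_cast at hN
  have h1 := heven (m + 1)
  rw [show ((2 * (m + 1) : ℕ) : ZMod (2 * m + 1)) = 0 + 1 by push_cast; linear_combination hN] at h1
  exact c.valid (hf 0) h1.symm

theorem IsInducedAnticycleOn.isInducedCycleOn_comp {V : Type*} {G : SimpleGraph V} {k m : ℕ}
    {f : ZMod k → V} (hf : IsInducedAnticycleOn G f) {σ : ZMod m → ZMod k}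
    (hσ : Function.Injective σ)
    (hσadj : ∀ i j, (σ i ≠ σ j ∧ ¬(σ j = σ i + 1 ∨ σ i = σ j + 1)) ↔ (j = i + 1 ∨ i = j + 1)) :
    IsInducedCycleOn G (f ∘ σ) :=
  ⟨hf.1.comp hσ, fun i j => (hf.2 _ _).trans (hσadj i j)⟩

theorem IsInducedAnticycleOn.not_colorable_three {V : Type*} {G : SimpleGraph V} {k : ℕ}
    (hk : 7 ≤ k) {f : ZMod k → V} (hf : IsInducedAnticycleOn G f) : ¬ G.Colorable 3 := by
  have : NeZero k := ⟨by omega⟩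
  rintro ⟨c⟩
  obtain ⟨col, hcol⟩ := Fintype.exists_lt_card_fiber_of_mul_lt_card (fun i => c (f i)) (n := 2)
    (by simp [ZMod.card]; omega)
  obtain ⟨x, hx, y, hy, z, hz, hxy, hxz, hyz⟩ := Finset.two_lt_card.1 hcol
  simp only [Finset.mem_filter, Finset.mem_univ, true_and] at hx hy hz
  have hcons : ∀ i j, i ≠ j → c (f i) = c (f j) → j = i + 1 ∨ i = j + 1 := fun i j hij he => by
    by_contra h
    exact c.valid ((hf.2 i j).2 ⟨hij, h⟩) he
  have h₁ := hcons x y hxy (hx.trans hy.symm)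
  have h₂ := hcons x z hxz (hx.trans hz.symm)
  have h₃ := hcons y z hyz (hy.trans hz.symm)
  have h3 : ((3 : ℕ) : ZMod k) ≠ 0 := ZMod.natCast_ne_zero_of_lt (by norm_num) (by omega)
  push_cast at h3
  grind

def sixAnticycleSquare : ZMod 4 → ZMod 6 := ![0, 2, 5, 3]

namespace SimpleGraph

variable {V : Type*} {G T : SimpleGraph V}

theorem IsDuallyChordalTree.not_isInducedCycleOn_of_odd (hT : G.IsDuallyChordalTree T)
    (hcol : G.Colorable 3) {k : ℕ} (hk : Odd k) (hk4 : 4 ≤ k) {f : ZMod k → V} :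
    ¬ IsInducedCycleOn G f := fun hf =>
  let ⟨a, ha⟩ := hT.exists_forall_adj_of_isInducedCycleOn (hcol.cliqueFree (by norm_num)) hk4 hf
  hf.isClosedWalkOn.not_colorable_three_of_forall_adj hk (fun i => hT.le (ha i)) hcol

theorem IsDuallyChordalTree.not_isInducedAnticycleOn_six (hT : G.IsDuallyChordalTree T)
    (hcol : G.Colorable 3) {f : ZMod 6 → V} : ¬ IsInducedAnticycleOn G f := by
  intro hf
  obtain ⟨a, ha⟩ := hT.exists_forall_adj_of_isInducedCycleOn (hcol.cliqueFree (by norm_num))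
    le_rfl (hf.isInducedCycleOn_comp (σ := sixAnticycleSquare) (by decide) (by decide))
  obtain ⟨c⟩ := hcol
  have hc : ∀ i j : ZMod 6, (i ≠ j ∧ ¬(j = i + 1 ∨ i = j + 1)) → c (f i) ≠ c (f j) :=
    fun i j h => c.valid ((hf.2 i j).2 h)
  have ha' : ∀ i, c a ≠ c (f (sixAnticycleSquare i)) := fun i => c.valid (hT.le (ha i))
  have h4 : c a = c (f 4) := fin_three_eq_of_ne (hc 0 2 (by decide)) (ha' 0) (ha' 1)
    (hc 4 0 (by decide)) (hc 4 2 (by decide))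
  have h1 : c a = c (f 1) := fin_three_eq_of_ne (hc 5 3 (by decide)) (ha' 2) (ha' 3)
    (hc 1 5 (by decide)) (hc 1 3 (by decide))
  exact hc 1 4 (by decide) (h1.symm.trans h4)

end SimpleGraph

theorem stmt_9_general {V : Type*} [Fintype V] (G T : SimpleGraph V)
    (hsub : T ≤ G) (htree : T.IsTree)
    (hpath : ∀ u v : V, G.Adj u v → ∀ p : T.Path u v, ∀ w ∈ p.1.support,
      w ≠ u → w ≠ v → G.Adj u w ∧ G.Adj v w)
    (hcol : G.Colorable 3) :
    (∀ k : ℕ, Odd k → 5 ≤ k → ∀ f : ZMod k → V, ¬ IsInducedCycleOn G f) ∧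
    (∀ k : ℕ, 5 ≤ k → ∀ f : ZMod k → V, ¬ IsInducedAnticycleOn G f) ∧
    IsPerfect G := by
  have hT : G.IsDuallyChordalTree T := ⟨hsub, htree, hpath⟩
  have hhole : ∀ k : ℕ, Odd k → 5 ≤ k → ∀ f : ZMod k → V, ¬ IsInducedCycleOn G f :=
    fun k hk hk5 f => hT.not_isInducedCycleOn_of_odd hcol hk (by omega)
  refine ⟨hhole, fun k hk f hf => ?_, isPerfect_of_colorable_three hcol hhole⟩
  obtain rfl | rfl | hk7 : k = 5 ∨ k = 6 ∨ 7 ≤ k := by omega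
  · exact hhole 5 (by decide) le_rfl _
      (hf.isInducedCycleOn_comp (σ := (2 * ·)) (by decide) (by decide))
  · exact hT.not_isInducedAnticycleOn_six hcol hf
  · exact hf.not_colorable_three hk7 hcol

theorem stmt_9 {V : Type*} [Fintype V] (G T : SimpleGraph V)
    (hGconn : G.Connected) (hsub : T ≤ G) (htree : T.IsTree)
    (hpath : ∀ u v : V, G.Adj u v → ∀ p : T.Path u v, ∀ w ∈ p.1.support,
      w ≠ u → w ≠ v → G.Adj u w ∧ G.Adj v w)
    (hcol : G.Colorable 3) :
    (∀ k : ℕ, Odd k → 5 ≤ k → ∀ f : ZMod k → V, ¬ IsInducedCycleOn G f) ∧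
    (∀ k : ℕ, 5 ≤ k → ∀ f : ZMod k → V, ¬ IsInducedAnticycleOn G f) ∧
    IsPerfect G :=
  stmt_9_general G T hsub htree hpath hcol
end

section
/- A dually chordal graph G is 3-colourable if and only if G is perfect and K4-free. -/
open SimpleGraph

/-!
A perfect K₄-free graph has χ = ω ≤ 3. Conversely, a 3-colourable graph is K₄-free, and it is
perfect as soon as each of its triangle-free induced subgraphs `G[s]` is bipartite.

Because `G` is K₄-free, the path condition forces every edge of `G` to join vertices at distance
at most 2 in `T`: the first two inner vertices of a longer `T`-path would span a K₄ with its
ends. Root `T` at `r` and fix a 3-colouring `χ` of `G`. An edge of `G[s]` then joins a vertex to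
its parent, to its grandparent through a parent outside `s`, or to a sibling, the common parent
lying outside `s` (as `G[s]` has no triangle). Colour `v` by the parity of the number of flips
along the tree path from `r` to `v`, where the step from `w` to its child `v` flips iff `w ∈ s`
or `χ v` is the reference colour of `w`: a colour other than `χ w`, equal to `χ (parent w)` when
`w ≠ r`. A parent or grandparent edge of `G[s]` is then crossed by exactly one flip, and of two
adjacent siblings, whose colours together with `χ w` exhaust all three, exactly one has the
reference colour.
-/

lemma Fin.eq_or_eq_of_ne_three {a b c d : Fin 3} (hab : a ≠ b) (hac : a ≠ c) (hbc : b ≠ c)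
    (hdc : d ≠ c) : d = a ∨ d = b := by
  revert a b c d
  decide

namespace SimpleGraph

variable {V : Type*}

section Perfect

variable {G : SimpleGraph V} [Finite V]

lemma cliqueFree_iff_cliqueNum_lt {n : ℕ} : G.CliqueFree n ↔ G.cliqueNum < n := by
  refine ⟨fun h => ?_, fun h t ht => ?_⟩
  · obtain ⟨t, ht⟩ := G.exists_isNClique_cliqueNum
    by_contra! hn
    exact h.mono hn t ht
  · exact h.not_ge (ht.card_eq ▸ ht.isClique.card_le_cliqueNum)

lemma colorable_cliqueNum_of_colorable_two (h : G.Colorable 2) : G.Colorable G.cliqueNum := by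
  have hfree (n : ℕ) (hn : G.cliqueNum = n) : G.CliqueFree (n + 1) :=
    cliqueFree_iff_cliqueNum_lt.2 (by omega)
  match hω : G.cliqueNum with
  | 0 => exact colorable_zero_iff.2 (cliqueFree_one.1 (hfree 0 hω))
  | 1 => exact colorable_one_iff.2 (cliqueFree_two.1 (hfree 1 hω))
  | n + 2 => exact h.mono (by omega)

lemma isPerfect_of_colorable_three (h3 : G.Colorable 3)
    (h2 : ∀ s : Set V, G.CliqueFreeOn s 3 → (G.induce s).Colorable 2) : IsPerfect G := by
  intro s
  refine le_antisymm (chromaticNumber_le_iff_colorable.2 ?_)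
    (G.induce s).cliqueNum_le_chromaticNumber
  by_cases hs : (G.induce s).CliqueFree 3
  · exact colorable_cliqueNum_of_colorable_two (h2 s ((cliqueFree_induce_iff G s 3).1 hs))
  · exact (h3.of_hom (Embedding.induce s).toHom).mono
      (not_lt.1 (mt cliqueFree_iff_cliqueNum_lt.2 hs))

lemma IsPerfect.colorable_of_cliqueFree {n : ℕ} (hG : IsPerfect G) (h : G.CliqueFree (n + 1)) :
    G.Colorable n := by
  have hω : (G.induce Set.univ).cliqueNum ≤ n :=
    Nat.le_of_lt_succ ((cliqueNum_induce_le _).trans_lt (cliqueFree_iff_cliqueNum_lt.1 h))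
  have hχ : (G.induce Set.univ).Colorable n := by
    rw [← chromaticNumber_le_iff_colorable, hG Set.univ]
    exact_mod_cast hω
  exact hχ.of_hom (induceUnivIso G).symm.toHom

end Perfect

lemma adj_or_exists_adj_adj_of_cliqueFree_four {G T : SimpleGraph V} (hsub : T ≤ G)
    (hT : T.Preconnected) (h4 : G.CliqueFree 4)
    (hpath : ∀ u v : V, G.Adj u v → ∀ p : T.Path u v, ∀ w ∈ p.1.support,
      w ≠ u → w ≠ v → G.Adj u w ∧ G.Adj v w)
    {u v : V} (huv : G.Adj u v) : T.Adj u v ∨ ∃ w, T.Adj u w ∧ T.Adj w v := by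
  classical
  obtain ⟨p, hp⟩ := (hT u v).some.toPath
  rcases p with _ | ⟨h₁, _ | ⟨h₂, _ | ⟨h₃, q⟩⟩⟩
  · exact absurd rfl huv.ne
  · exact .inl h₁
  · exact .inr ⟨_, h₁, h₂⟩
  · rename_i w₁ w₂ w₃
    have hnd := hp
    simp only [Walk.cons_isPath_iff, Walk.support_cons, List.mem_cons, not_or] at hnd
    have hv : v ∈ q.support := q.end_mem_support
    obtain ⟨hw₁u, hw₁v⟩ := hpath u v huv ⟨_, hp⟩ w₁ (by simp) (by grind) (by grind)
    obtain ⟨hw₂u, hw₂v⟩ := hpath u v huv ⟨_, hp⟩ w₂ (by simp) (by grind) (by grind)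
    refine (h4 {u, w₁, w₂, v} ?_).elim
    refine (is3Clique_triple_iff.2 ⟨hsub h₂, hw₁v.symm, hw₂v.symm⟩).insert ?_
    simp [hw₁u, hw₂u, huv]

namespace IsTree

section Rooted

variable {T : SimpleGraph V} (hT : T.IsTree) (r : V)

noncomputable def rootPath (v : V) : T.Path r v :=
  ⟨_, (hT.existsUnique_path r v).exists.choose_spec⟩

noncomputable def parent (v : V) : V := (hT.rootPath r v).1.penultimate

noncomputable def rootPathSum {A : Type*} [AddCommMonoid A] (f : V → A) (v : V) : A :=
  ((hT.rootPath r v).1.support.map f).sum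

variable {hT r}

lemma parent_root : hT.parent r r = r := by
  rw [parent, hT.isAcyclic.subsingleton_path r r |>.elim (hT.rootPath r r) Path.nil]
  rfl

lemma adj_parent {v : V} (hv : v ≠ r) : T.Adj (hT.parent r v) v :=
  Walk.adj_penultimate (Walk.not_nil_of_ne hv.symm)

lemma ne_root_of_parent_eq {u v : V} (h : hT.parent r v = u) (huv : u ≠ v) : v ≠ r := by
  rintro rfl
  exact huv (h.symm.trans parent_root)

lemma parent_eq_of_mem_rootPath {u v : V} (h : T.Adj u v)
    (hu : u ∈ (hT.rootPath r v).1.support) : hT.parent r v = u :=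
  (hT.isAcyclic.eq_penultimate_of_adj_end (hT.rootPath r v).2 h.symm hu).symm

lemma parent_eq_or_parent_eq {u v : V} (h : T.Adj u v) :
    hT.parent r v = u ∨ hT.parent r u = v := by
  by_cases hu : u ∈ (hT.rootPath r v).1.support
  · exact .inl (parent_eq_of_mem_rootPath h hu)
  · exact .inr <| parent_eq_of_mem_rootPath h.symm <|
      hT.isAcyclic.mem_support_of_ne_mem_support_of_adj_of_isPath (hT.rootPath r u).2
        (hT.rootPath r v).2 h hu

lemma rootPathSum_eq_add {A : Type*} [AddCommMonoid A] (f : V → A) {v : V} (hv : v ≠ r) :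
    hT.rootPathSum r f v = hT.rootPathSum r f (hT.parent r v) + f v := by
  have hconcat : (hT.rootPath r v).1 = (hT.rootPath r (hT.parent r v)).1.concat (adj_parent hv) :=
    hT.isAcyclic.path_concat (hT.rootPath r _).2 (hT.rootPath r v).2 _
      (Walk.getVert_mem_support _ _)
  simp [rootPathSum, hconcat, Walk.support_concat]

end Rooted

section Parity

variable {G T : SimpleGraph V} (hT : T.IsTree) (r : V) (χ : G.Coloring (Fin 3)) (s : Set V)

open Classical in
noncomputable def refColor (w : V) : Fin 3 := if w = r then χ w + 1 else χ (hT.parent r w)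

open Classical in
noncomputable def parityStep (v : V) : ZMod 2 :=
  if hT.parent r v ∈ s ∨ χ v = hT.refColor r χ (hT.parent r v) then 1 else 0

noncomputable def parity : V → ZMod 2 := hT.rootPathSum r (hT.parityStep r χ s)

variable {hT r χ s}

lemma refColor_ne (hsub : T ≤ G) (w : V) : hT.refColor r χ w ≠ χ w := by
  unfold refColor
  split_ifs with hw
  · exact (by decide : ∀ a : Fin 3, a + 1 ≠ a) _
  · exact χ.valid (hsub (adj_parent hw))

lemma parity_of_parent_mem {u v : V} (h : hT.parent r v = u) (huv : u ≠ v) (hu : u ∈ s) :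
    hT.parity r χ s v = hT.parity r χ s u + 1 := by
  rw [parity, rootPathSum_eq_add _ (ne_root_of_parent_eq h huv), parityStep, h,
    if_pos (.inl hu)]

lemma parity_of_grandparent_mem {u w v : V} (hwv : hT.parent r v = w) (huw : hT.parent r w = u)
    (hwv' : w ≠ v) (huw' : u ≠ w) (hw : w ∉ s) (hu : u ∈ s) (huv : G.Adj u v) :
    hT.parity r χ s v = hT.parity r χ s u + 1 := by
  have hχ : χ v ≠ hT.refColor r χ w := by
    rw [refColor, if_neg (ne_root_of_parent_eq huw huw'), huw]
    exact (χ.valid huv).symm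
  rw [← parity_of_parent_mem huw huw' hu, parity,
    rootPathSum_eq_add _ (ne_root_of_parent_eq hwv hwv'), parityStep, hwv,
    if_neg (by tauto), add_zero]

lemma parity_ne_of_parent_eq (hsub : T ≤ G) {u w v : V} (hwu : hT.parent r u = w)
    (hwv : hT.parent r v = w) (hwu' : w ≠ u) (hwv' : w ≠ v) (hw : w ∉ s) (huv : G.Adj u v) :
    hT.parity r χ s u ≠ hT.parity r χ s v := by
  have hstep {x : V} (hx : hT.parent r x = w) (hx' : w ≠ x) :
      hT.parity r χ s x = hT.parity r χ s w + if χ x = hT.refColor r χ w then 1 else 0 := by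
    rw [parity, rootPathSum_eq_add _ (ne_root_of_parent_eq hx hx'), parityStep, hx]
    simp [hw]
  have hχ {x : V} (hx : hT.parent r x = w) (hx' : w ≠ x) : χ w ≠ χ x :=
    χ.valid (hsub (hx ▸ adj_parent (ne_root_of_parent_eq hx hx')))
  rw [hstep hwu hwu', hstep hwv hwv']
  rcases Fin.eq_or_eq_of_ne_three (χ.valid huv) (hχ hwu hwu').symm (hχ hwv hwv').symm
    (refColor_ne (hT := hT) (r := r) hsub w) with he | he
  · simp [he, (χ.valid huv).symm]
  · simp [he, χ.valid huv]

lemma parity_ne_of_adj (hsub : T ≤ G) (h4 : G.CliqueFree 4)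
    (hpath : ∀ u v : V, G.Adj u v → ∀ p : T.Path u v, ∀ w ∈ p.1.support,
      w ≠ u → w ≠ v → G.Adj u w ∧ G.Adj v w)
    (hs : G.CliqueFreeOn s 3) {u v : V} (hu : u ∈ s) (hv : v ∈ s) (huv : G.Adj u v) :
    hT.parity r χ s u ≠ hT.parity r χ s v := by
  classical
  rcases adj_or_exists_adj_adj_of_cliqueFree_four hsub hT.connected.preconnected h4 hpath huv
    with ht | ⟨w, huw, hwv⟩
  · rcases hT.parent_eq_or_parent_eq ht with h | h
    · rw [parity_of_parent_mem h ht.ne hu]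
      exact (succ_ne_self _).symm
    · rw [parity_of_parent_mem h ht.ne' hv]
      exact succ_ne_self _
  have hw : w ∉ s := fun hw => hs (t := {u, w, v}) (by simp [Set.insert_subset_iff, *])
    (is3Clique_triple_iff.2 ⟨hsub huw, huv, hsub hwv⟩)
  rcases hT.parent_eq_or_parent_eq huw with h₁ | h₁ <;>
    rcases hT.parent_eq_or_parent_eq hwv with h₂ | h₂
  · rw [parity_of_grandparent_mem h₂ h₁ hwv.ne huw.ne hw hu huv]
    exact (succ_ne_self _).symm
  · exact absurd (h₁.symm.trans h₂) huv.ne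
  · exact parity_ne_of_parent_eq hsub h₁ h₂ huw.ne' hwv.ne hw huv
  · rw [parity_of_grandparent_mem h₁ h₂ huw.ne' hwv.ne' hw hv huv.symm]
    exact succ_ne_self _

end Parity

end IsTree

theorem colorable_two_induce_of_cliqueFreeOn {G T : SimpleGraph V} (hsub : T ≤ G) (hT : T.IsTree)
    (h4 : G.CliqueFree 4)
    (hpath : ∀ u v : V, G.Adj u v → ∀ p : T.Path u v, ∀ w ∈ p.1.support,
      w ≠ u → w ≠ v → G.Adj u w ∧ G.Adj v w)
    (h3 : G.Colorable 3) {s : Set V} (hs : G.CliqueFreeOn s 3) : (G.induce s).Colorable 2 := by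
  obtain ⟨r⟩ := hT.connected.nonempty
  obtain ⟨χ⟩ := h3
  have := (Coloring.mk (G := G.induce s) (fun v => hT.parity r χ s v)
    fun {u v} huv => IsTree.parity_ne_of_adj hsub h4 hpath hs u.2 v.2 huv).colorable
  rwa [ZMod.card] at this

end SimpleGraph

theorem stmt_10_general {V : Type*} [Fintype V] (G T : SimpleGraph V)
    (hsub : T ≤ G) (htree : T.IsTree)
    (hpath : ∀ u v : V, G.Adj u v → ∀ p : T.Path u v, ∀ w ∈ p.1.support,
      w ≠ u → w ≠ v → G.Adj u w ∧ G.Adj v w) :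
    G.Colorable 3 ↔ (IsPerfect G ∧ G.CliqueFree 4) := by
  refine ⟨fun h3 => ?_, fun ⟨hG, h4⟩ => hG.colorable_of_cliqueFree h4⟩
  have h4 : G.CliqueFree 4 := h3.cliqueFree (by norm_num)
  exact ⟨isPerfect_of_colorable_three h3 fun s hs =>
    colorable_two_induce_of_cliqueFreeOn hsub htree h4 hpath h3 hs, h4⟩

theorem stmt_10 {V : Type*} [Fintype V] (G T : SimpleGraph V)
    (hGconn : G.Connected) (hsub : T ≤ G) (htree : T.IsTree)
    (hpath : ∀ u v : V, G.Adj u v → ∀ p : T.Path u v, ∀ w ∈ p.1.support,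
      w ≠ u → w ≠ v → G.Adj u w ∧ G.Adj v w) :
    G.Colorable 3 ↔ (IsPerfect G ∧ G.CliqueFree 4) :=
  stmt_10_general G T hsub htree hpath
end

section
/- Let G be a connected, locally connected, K4-free graph with at least one edge. Then any two proper 3-colourings of G that agree on the two endpoints of some edge agree on all of G. -/
open SimpleGraph

lemma fin3_unique {a b x y : Fin 3} (hab : a ≠ b) (hxa : x ≠ a) (hxb : x ≠ b)
    (hya : y ≠ a) (hyb : y ≠ b) : x = y := by
  revert hab hxa hxb hya hyb; revert a b x y; decide

theorem stmt_13 {V : Type*} [Fintype V] (G : SimpleGraph V)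
    (hconn : G.Connected)
    (hloc : ∀ v : V, (G.induce (G.neighborSet v)).Connected)
    (hK4 : G.CliqueFree 4)
    (u v : V) (huv : G.Adj u v)
    (c₁ c₂ : V → Fin 3)
    (hc₁ : ∀ a b : V, G.Adj a b → c₁ a ≠ c₁ b)
    (hc₂ : ∀ a b : V, G.Adj a b → c₂ a ≠ c₂ b)
    (hu : c₁ u = c₂ u) (hv : c₁ v = c₂ v) :
    c₁ = c₂ := by
  -- agreement spreads along walks in the neighborhood of an agreed vertex
  have spread : ∀ t : V, c₁ t = c₂ t →
      ∀ (x y : ↥(G.neighborSet t)) (w : (G.induce (G.neighborSet t)).Walk x y),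
        c₁ x.1 = c₂ x.1 → c₁ y.1 = c₂ y.1 := by
    intro t ht x y w
    induction w with
    | nil => exact fun h => h
    | @cons a b y' h p ih =>
      intro ha
      apply ih
      have hadj : G.Adj a.1 b.1 := h
      have hta : G.Adj t a.1 := a.2
      have htb : G.Adj t b.1 := b.2
      exact fin3_unique (hc₁ t a.1 hta) (Ne.symm (hc₁ t b.1 htb))
        (Ne.symm (hc₁ a.1 b.1 hadj))
        (by rw [ht]; exact Ne.symm (hc₂ t b.1 htb))
        (by rw [ha]; exact Ne.symm (hc₂ a.1 b.1 hadj))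
  -- P t : agreement at t together with an agreed neighbour
  set P : V → Prop := fun t => c₁ t = c₂ t ∧ ∃ s, G.Adj t s ∧ c₁ s = c₂ s with hP
  have step : ∀ x z : V, G.Adj x z → P x → P z := by
    rintro x z hxz ⟨hx, s, hxs, hs⟩
    have hz : c₁ z = c₂ z := by
      obtain ⟨w⟩ := (hloc x).preconnected ⟨s, hxs⟩ ⟨z, hxz⟩
      exact spread x hx _ _ w hs
    exact ⟨hz, x, hxz.symm, hx⟩
  have walkP : ∀ (x y : V) (w : G.Walk x y), P x → P y := by
    intro x y w
    induction w with
    | nil => exact fun h => h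
    | cons h p ih => exact fun hx => ih (step _ _ h hx)
  have hPu : P u := ⟨hu, v, huv, hv⟩
  funext t
  obtain ⟨w⟩ := hconn.preconnected u t
  exact (walkP u t w hPu).1
end

section
/- Every block (maximal 2-connected subgraph) of a graph whose clique graph is chordal is locally connected; equivalently, if a vertex v of such a graph has disconnected open neighbourhood, then v is an articulation point. -/
open SimpleGraph

/-- The clique graph of `G`: vertices are the maximal cliques of `G`,
two distinct maximal cliques being adjacent iff they intersect. -/
def cliqueGraph {V : Type*} (G : SimpleGraph V) :
    SimpleGraph {s : Set V // Maximal G.IsClique s} where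
  Adj s t := s ≠ t ∧ (s.1 ∩ t.1).Nonempty
  symm := by
    refine ⟨?_⟩
    rintro s t ⟨hne, x, hx⟩
    exact ⟨hne.symm, x, hx.2, hx.1⟩
  loopless := by refine ⟨?_⟩; rintro s ⟨hne, _⟩; exact hne rfl

/-- A graph is chordal iff it has no induced cycle of length at least `4`. -/
def IsChordal' {W : Type*} (H : SimpleGraph W) : Prop :=
  ∀ k : ℕ, 4 ≤ k → ∀ f : ZMod k → W, ¬ IsInducedCycleOn H f

/-!
Suppose `v` has a disconnected neighbourhood while `G - v` is connected, and take a shortest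
path `p₀ p₁ … pₙ` in `G - v` between two neighbours of `v` lying in different components of
`G[N(v)]`. Then `n ≥ 2`, the inner vertices are not adjacent to `v`, and a vertex lying in a common clique
with two non-consecutive edges of the cycle `v p₀ … pₙ v` would yield a shorter such path.
So maximal cliques chosen along the edges of this cycle form an induced cycle of length
`n + 2 ≥ 4` in the clique graph.
-/

theorem ZMod.natCast_ne_zero_of_pos_of_lt {k m : ℕ} (h0 : 0 < m) (hm : m < k) :
    (m : ZMod k) ≠ 0 := by
  rw [Ne, ZMod.natCast_eq_zero_iff]
  exact fun h ↦ (Nat.le_of_dvd h0 h).not_gt hm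

section

variable {V : Type*} {G : SimpleGraph V}

theorem SimpleGraph.IsClique.exists_maximal_superset {s : Set V} (hs : G.IsClique s) :
    ∃ t, s ⊆ t ∧ Maximal G.IsClique t :=
  zorn_subset_nonempty {t | G.IsClique t}
    (fun _ hc hchain _ ↦ ⟨_, (Set.pairwise_sUnion hchain.directedOn).2 hc,
      fun _ ↦ Set.subset_sUnion_of_mem⟩) s hs

theorem not_isChordal'_cliqueGraph_of_cycle {k : ℕ} (hk : 4 ≤ k) (y : ZMod k → V)
    (hadj : ∀ i, G.Adj (y i) (y (i + 1)))
    (hsep : ∀ i j, j ≠ i → j ≠ i + 1 → i ≠ j + 1 → ∀ w,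
      G.IsClique {w, y i, y (i + 1)} → ¬ G.IsClique {w, y j, y (j + 1)}) :
    ¬ IsChordal' (cliqueGraph G) := by
  intro hchordal
  have hedge i : G.IsClique {y i, y (i + 1)} := isClique_pair.2 fun _ ↦ hadj i
  choose C hyC hC using fun i ↦ (hedge i).exists_maximal_superset
  have hdisj i j (hji : j ≠ i) (hj : j ≠ i + 1) (hi : i ≠ j + 1) w (hwi : w ∈ C i)
      (hwj : w ∈ C j) : False :=
    hsep i j hji hj hi w ((hC i).prop.subset (Set.insert_subset hwi (hyC i)))
      ((hC j).prop.subset (Set.insert_subset hwj (hyC j)))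
  have hmeet i : y (i + 1) ∈ C i ∩ C (i + 1) := ⟨hyC i (by simp), hyC (i + 1) (by simp)⟩
  have h1 : (1 : ZMod k) ≠ 0 := by
    exact_mod_cast ZMod.natCast_ne_zero_of_pos_of_lt one_pos (by omega)
  have h2 : (2 : ZMod k) ≠ 0 := by
    exact_mod_cast ZMod.natCast_ne_zero_of_pos_of_lt two_pos (by omega)
  have h3 : (3 : ZMod k) ≠ 0 := by
    exact_mod_cast ZMod.natCast_ne_zero_of_pos_of_lt three_pos (by omega)
  -- if `C i = C (i + 1)`, then `C i` would meet `C (i + 2)`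
  have hsucc i : C i ≠ C (i + 1) := fun h ↦
    hdisj i (i + 2) (fun e ↦ h2 (by linear_combination e))
      (fun e ↦ h1 (by linear_combination e)) (fun e ↦ h3 (by linear_combination -e)) _
      (h ▸ (hmeet (i + 1)).1)
      ((show i + 1 + 1 = i + 2 by ring) ▸ (hmeet (i + 1)).2)
  have hinj : Function.Injective C := by
    intro i j hij
    by_contra hne
    by_cases hj : j = i + 1
    · exact hsucc i (hj ▸ hij)
    by_cases hi : i = j + 1
    · exact hsucc j (hi ▸ hij.symm)
    exact hdisj i j (Ne.symm hne) hj hi _ (hmeet i).1 (hij ▸ (hmeet i).1)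
  refine hchordal k hk (fun i ↦ ⟨C i, hC i⟩)
    ⟨fun i j h ↦ hinj (congrArg Subtype.val h), fun i j ↦ ?_⟩
  refine ⟨fun ⟨hne, w, hwi, hwj⟩ ↦ ?_, ?_⟩
  · by_contra! h
    exact hdisj i j (fun e ↦ hne (by subst e; rfl)) h.1 h.2 w hwi hwj
  · rintro (rfl | rfl)
    · exact ⟨fun e ↦ hsucc i (congrArg Subtype.val e), _, hmeet i⟩
    · exact ⟨fun e ↦ hsucc j (congrArg Subtype.val e).symm, _, (hmeet j).2, (hmeet j).1⟩

theorem not_isChordal'_cliqueGraph_of_closed_walk {k : ℕ} (hk : 4 ≤ k) (Y : ℕ → V)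
    (hclose : Y k = Y 0) (hadj : ∀ m < k, G.Adj (Y m) (Y (m + 1)))
    (hsep : ∀ a b, a + 2 ≤ b → b < k → (a = 0 → b + 1 < k) → ∀ w,
      G.IsClique {w, Y a, Y (a + 1)} → ¬ G.IsClique {w, Y b, Y (b + 1)}) :
    ¬ IsChordal' (cliqueGraph G) := by
  have : NeZero k := ⟨by omega⟩
  have : Fact (1 < k) := ⟨by omega⟩
  have hval_succ (i : ZMod k) : (i + 1).val = (i.val + 1) % k := by
    rw [ZMod.val_add, ZMod.val_one]
  have hY_succ (i : ZMod k) : Y (i + 1).val = Y (i.val + 1) := by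
    rw [hval_succ]
    rcases Nat.lt_or_eq_of_le (ZMod.val_lt i) with h | h
    · rw [Nat.mod_eq_of_lt (by omega)]
    · rw [show i.val + 1 = k from h, Nat.mod_self, hclose]
  refine not_isChordal'_cliqueGraph_of_cycle hk (fun i ↦ Y i.val)
    (fun i ↦ hY_succ i ▸ hadj _ (ZMod.val_lt i)) ?_
  intro i j hji hj hi w
  wlog hlt : i.val < j.val generalizing i j
  · exact fun hwi hwj ↦ this j i hji.symm hi hj (lt_of_le_of_ne (not_lt.1 hlt)
      (fun e ↦ hji (ZMod.val_injective k e))) hwj hwi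
  simp only [hY_succ]
  refine hsep _ _ ?_ (ZMod.val_lt j) ?_ w
  all_goals have := ZMod.val_lt j; by_contra! h
  · exact hj (ZMod.val_injective k (by rw [hval_succ, Nat.mod_eq_of_lt (by omega)]; omega))
  · exact hi (ZMod.val_injective k (by
      rw [hval_succ, show j.val + 1 = k by omega, Nat.mod_self, h.1]))

theorem SimpleGraph.Walk.dist_le_getVert {u w : V} (p : G.Walk u w) (i : ℕ) :
    G.dist u (p.getVert i) ≤ i :=
  (dist_le (p.take i)).trans (by rw [Walk.take_length]; exact min_le_left _ _)

theorem SimpleGraph.Walk.dist_getVert_le {u w : V} (p : G.Walk u w) (i : ℕ) :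
    G.dist (p.getVert i) w ≤ p.length - i :=
  (dist_le (p.drop i)).trans (Walk.drop_length p i).le

theorem SimpleGraph.dist_induce_le_one_of_mem_isClique {S s : Set V} (hs : G.IsClique s)
    {x y : S} (hx : (x : V) ∈ s) (hy : (y : V) ∈ s) : (G.induce S).dist x y ≤ 1 := by
  rcases eq_or_ne x y with rfl | hne
  · simp
  · exact (dist_eq_one_iff_adj.2 (G.induce_adj.2 (hs hx hy (Subtype.val_injective.ne hne)))).le

def NbrSeparated (G : SimpleGraph V) (v a b : V) : Prop :=
  ∃ (ha : a ∈ G.neighborSet v) (hb : b ∈ G.neighborSet v),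
    ¬ (G.induce (G.neighborSet v)).Reachable ⟨a, ha⟩ ⟨b, hb⟩

section NbrSeparated

variable {v a b u : V}

theorem NbrSeparated.symm (h : NbrSeparated G v a b) : NbrSeparated G v b a :=
  let ⟨ha, hb, hr⟩ := h
  ⟨hb, ha, fun r ↦ hr r.symm⟩

theorem NbrSeparated.left_or_right (h : NbrSeparated G v a b) (hu : u ∈ G.neighborSet v) :
    NbrSeparated G v a u ∨ NbrSeparated G v u b := by
  obtain ⟨ha, hb, hr⟩ := h
  by_contra! h
  simp only [NbrSeparated, not_exists, not_not] at h
  exact hr ((h.1 ha hu).trans (h.2 hu hb))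

theorem NbrSeparated.false_of_mem_isClique (h : NbrSeparated G v a b) {s : Set V}
    (hs : G.IsClique s) (ha : a ∈ s) (hb : b ∈ s) : False := by
  obtain ⟨ha', hb', hr⟩ := h
  rcases eq_or_ne a b with rfl | hne
  · exact hr .rfl
  · exact hr (Adj.reachable (by simpa using hs ha hb hne))

theorem exists_nbrSeparated (hv : ∃ w, G.Adj v w)
    (hN : ¬ (G.induce (G.neighborSet v)).Connected) : ∃ a b, NbrSeparated G v a b := by
  obtain ⟨w, hw⟩ := hv
  have : Nonempty (G.neighborSet v) := ⟨⟨w, hw⟩⟩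
  rw [connected_iff, and_iff_left this, Preconnected] at hN
  push Not at hN
  obtain ⟨⟨a, ha⟩, ⟨b, hb⟩, hr⟩ := hN
  exact ⟨a, b, ha, hb, hr⟩

end NbrSeparated

def IsShortestNbrSeparatingWalk (G : SimpleGraph V) (v : V) {a b : {u | u ≠ v}}
    (p : (G.induce {u | u ≠ v}).Walk a b) : Prop :=
  NbrSeparated G v a b ∧
    ∀ a' b' : {u | u ≠ v}, NbrSeparated G v a' b' →
      p.length ≤ (G.induce {u | u ≠ v}).dist a' b'

theorem exists_isShortestNbrSeparatingWalk {v : V} (hH : (G.induce {u | u ≠ v}).Connected)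
    (h : ∃ a b, NbrSeparated G v a b) :
    ∃ (a b : {u | u ≠ v}) (p : (G.induce {u | u ≠ v}).Walk a b),
      IsShortestNbrSeparatingWalk G v p := by
  classical
  have hex : ∃ m, ∃ a b : {u | u ≠ v}, NbrSeparated G v a b ∧
      (G.induce {u | u ≠ v}).dist a b = m := by
    obtain ⟨a, b, hab⟩ := h
    obtain ⟨ha, hb, -⟩ := id hab
    exact ⟨_, ⟨a, G.ne_of_adj ha.symm⟩, ⟨b, G.ne_of_adj hb.symm⟩, hab, rfl⟩
  obtain ⟨a, b, hab, hdist⟩ := Nat.find_spec hex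
  obtain ⟨p, hp⟩ := hH.exists_walk_length_eq_dist a b
  exact ⟨a, b, p, hab, fun a' b' h ↦ hp ▸ hdist ▸ Nat.find_min' hex ⟨a', b', h, rfl⟩⟩

namespace IsShortestNbrSeparatingWalk

variable {v : V} {a b : {u | u ≠ v}} {p : (G.induce {u | u ≠ v}).Walk a b}

theorem two_le_length (hp : IsShortestNbrSeparatingWalk G v p) : 2 ≤ p.length := by
  by_contra! h
  interval_cases hl : p.length
  · obtain rfl := Walk.eq_of_length_eq_zero hl
    exact hp.1.false_of_mem_isClique (G.isClique_singleton _) rfl rfl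
  · exact hp.1.false_of_mem_isClique (s := {(a : V), (b : V)})
      (isClique_pair.2 fun _ ↦ G.induce_adj.1 (Walk.adj_of_length_eq_one hl)) (by simp) (by simp)

theorem getVert_notMem_neighborSet (hp : IsShortestNbrSeparatingWalk G v p) {i : ℕ}
    (h0 : 0 < i) (hi : i < p.length) :
    (p.getVert i : V) ∉ G.neighborSet v := by
  intro hx
  rcases hp.1.left_or_right hx with h | h
  · have := hp.2 _ _ h
    have := p.dist_le_getVert i
    omega
  · have := hp.2 _ _ h
    have := p.dist_getVert_le i
    omega

theorem ne_of_isClique (hp : IsShortestNbrSeparatingWalk G v p) {w : V} {i : ℕ}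
    (hi : i < p.length)
    (hw : G.IsClique {w, (p.getVert i : V), (p.getVert (i + 1) : V)}) : w ≠ v := by
  rintro rfl
  have hadj {j} (hj : j = i ∨ j = i + 1) : (p.getVert j : V) ∈ G.neighborSet w :=
    hw (by simp) (by rcases hj with rfl | rfl <;> simp) (p.getVert j).2.symm
  have := hp.two_le_length
  rcases Nat.eq_zero_or_pos i with rfl | h0
  · exact hp.getVert_notMem_neighborSet one_pos (by omega) (hadj (Or.inr rfl))
  · exact hp.getVert_notMem_neighborSet h0 hi (hadj (Or.inl rfl))

theorem not_isClique_of_add_two_le (hp : IsShortestNbrSeparatingWalk G v p)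
    (hH : (G.induce {u | u ≠ v}).Connected) {w : V} {i j : ℕ}
    (hij : i + 2 ≤ j) (hj : j < p.length)
    (hwi : G.IsClique {w, (p.getVert i : V), (p.getVert (i + 1) : V)}) :
    ¬ G.IsClique {w, (p.getVert j : V), (p.getVert (j + 1) : V)} := by
  intro hwj
  let w' : {u | u ≠ v} := ⟨w, hp.ne_of_isClique (by omega) hwi⟩
  have := hp.2 _ _ hp.1
  have := hH.dist_triangle (u := a) (v := p.getVert i) (w := b)
  have := hH.dist_triangle (u := p.getVert i) (v := w') (w := b)
  have := hH.dist_triangle (u := w') (v := p.getVert (j + 1)) (w := b)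
  have := p.dist_le_getVert i
  have := p.dist_getVert_le (j + 1)
  have := dist_induce_le_one_of_mem_isClique hwi (x := p.getVert i) (y := w') (by simp)
    (by simp [w'])
  have := dist_induce_le_one_of_mem_isClique hwj (x := w') (y := p.getVert (j + 1))
    (by simp [w']) (by simp)
  omega

theorem not_isClique_of_first (hp : IsShortestNbrSeparatingWalk G v p)
    (hH : (G.induce {u | u ≠ v}).Connected) {w : V} {j : ℕ}
    (hj0 : 0 < j) (hj : j < p.length)
    (hwa : G.IsClique {w, v, (a : V)}) :
    ¬ G.IsClique {w, (p.getVert j : V), (p.getVert (j + 1) : V)} := by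
  intro hwj
  have hwv := hp.ne_of_isClique hj hwj
  let w' : {u | u ≠ v} := ⟨w, hwv⟩
  have hwN : w ∈ G.neighborSet v := (hwa (by simp) (by simp) hwv).symm
  rcases hp.1.left_or_right hwN with h | h
  · exact h.false_of_mem_isClique hwa (by simp) (by simp)
  · have := hp.2 w' b h
    have := hH.dist_triangle (u := w') (v := p.getVert (j + 1)) (w := b)
    have := p.dist_getVert_le (j + 1)
    have := dist_induce_le_one_of_mem_isClique hwj (x := w') (y := p.getVert (j + 1))
      (by simp [w']) (by simp)
    omega

theorem not_isClique_of_last (hp : IsShortestNbrSeparatingWalk G v p)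
    (hH : (G.induce {u | u ≠ v}).Connected) {w : V} {i : ℕ}
    (hi : i + 2 ≤ p.length)
    (hwb : G.IsClique {w, (b : V), v}) :
    ¬ G.IsClique {w, (p.getVert i : V), (p.getVert (i + 1) : V)} := by
  intro hwi
  have hwv := hp.ne_of_isClique (by omega) hwi
  let w' : {u | u ≠ v} := ⟨w, hwv⟩
  have hwN : w ∈ G.neighborSet v := (hwb (by simp) (by simp) hwv).symm
  rcases hp.1.left_or_right hwN with h | h
  · have := hp.2 a w' h
    have := hH.dist_triangle (u := a) (v := p.getVert i) (w := w')
    have := p.dist_le_getVert i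
    have := dist_induce_le_one_of_mem_isClique hwi (x := p.getVert i) (y := w') (by simp)
      (by simp [w'])
    omega
  · exact h.symm.false_of_mem_isClique hwb (by simp) (by simp)

theorem not_isChordal' (hp : IsShortestNbrSeparatingWalk G v p)
    (hH : (G.induce {u | u ≠ v}).Connected) : ¬ IsChordal' (cliqueGraph G) := by
  obtain ⟨ha, hb, -⟩ := hp.1
  have hn := hp.two_le_length
  -- the closed walk `v, a = p₀, p₁, …, pₙ = b, v`
  let Y : ℕ → V := fun m ↦ if m = 0 ∨ p.length + 2 ≤ m then v else p.getVert (m - 1)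
  have hY0 : Y 0 = v := by simp [Y]
  have hYlast : Y (p.length + 2) = v := by simp [Y]
  have hYsucc {i} (hi : i ≤ p.length) : Y (i + 1) = p.getVert i := by
    simp only [Y, if_neg (show ¬(i + 1 = 0 ∨ p.length + 2 ≤ i + 1) by omega),
      Nat.add_sub_cancel]
  refine not_isChordal'_cliqueGraph_of_closed_walk (k := p.length + 2) (by omega) Y
    (hYlast.trans hY0.symm) ?_ ?_
  · intro m hm
    rcases m with _ | i
    · rw [hY0, hYsucc (by omega), p.getVert_zero]
      exact ha
    · rcases (show i < p.length ∨ i = p.length by omega) with hi | rfl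
      · rw [hYsucc hi.le, hYsucc hi]
        exact p.adj_getVert_succ hi
      · rw [hYsucc le_rfl, hYlast, p.getVert_length]
        exact hb.symm
  · intro i j hij hj hclose w
    obtain ⟨j, rfl⟩ : ∃ j', j = j' + 1 := ⟨j - 1, by omega⟩
    rcases i with _ | i
    · simp (disch := omega) only [hY0, hYsucc, p.getVert_zero]
      exact hp.not_isClique_of_first hH (by omega) (by omega)
    rcases (show j < p.length ∨ j = p.length by omega) with hj | rfl
    · simp (disch := omega) only [hYsucc]
      exact hp.not_isClique_of_add_two_le hH (by omega) hj
    · simp (disch := omega) only [hYsucc, hYlast, p.getVert_length]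
      exact fun hwi hwb ↦ hp.not_isClique_of_last hH (by omega) hwb hwi

end IsShortestNbrSeparatingWalk

end

theorem stmt_14_general {V : Type*} (G : SimpleGraph V)
    (hconn : G.Connected) (hchordal : IsChordal' (cliqueGraph G)) :
    ∀ v : V, ¬ (G.induce (G.neighborSet v)).Connected →
      ¬ (G.induce {u : V | u ≠ v}).Connected := by
  intro v hN hH
  obtain ⟨⟨u, hu⟩⟩ := hH.nonempty
  have : Nontrivial V := ⟨⟨u, v, hu⟩⟩
  obtain ⟨a, b, p, hp⟩ := exists_isShortestNbrSeparatingWalk hH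
    (exists_nbrSeparated (hconn.preconnected.exists_adj_of_nontrivial v) hN)
  exact hp.not_isChordal' hH hchordal

theorem stmt_14 {V : Type*} [Fintype V] (G : SimpleGraph V)
    (hconn : G.Connected) (hchordal : IsChordal' (cliqueGraph G)) :
    ∀ v : V, ¬ (G.induce (G.neighborSet v)).Connected →
      ¬ (G.induce {u : V | u ≠ v}).Connected :=
  stmt_14_general G hconn hchordal
end
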